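/- arXiv:2203.09856 — 9 statements merged into one kernel-verified Lean document; each statement's English description precedes it below -/
import Mathlib

section
/- Let Γ = Circ(n; S) be a circulant and let 𝒜_n(S) = { j ∈ {0,...,n-1} : Σ_{s∈S} e^{2πijs/n} = 0 }. If there exists a divisor d of n with 1 < d < n dividing every j ∈ 𝒜_n(S), then Γ is not distance magic. -/
/-!
Write `e = ZMod.stdAddChar` and `𝓕` for the discrete Fourier transform on `ZMod n`. The
translation operator `Φ ↦ ∑ s ∈ S, Φ (· + s)` is diagonalised by `𝓕`, with eigenvalue
`λ k = ∑ s ∈ S, e (s * k)` at frequency `k`. For a magic labelling `ℓ` this operator sends `ℓ` to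
a constant, whose transform vanishes off `k = 0`; hence `λ k * 𝓕 ℓ k = 0` for `k ≠ 0`, so `𝓕 ℓ` is
supported on `0` together with frequencies of vanishing eigenvalue, all multiples of `d`. Every such
frequency is killed by `m = n / d`, i.e. `e (m * k) = 1`, so `𝓕 ℓ` is unchanged by translation by
`m` and `ℓ` is `m`-periodic. As `m ≠ 0`, `ℓ m = ℓ 0` contradicts injectivity.
-/

open Finset

namespace ZMod

variable {N : ℕ} [NeZero N] {E : Type*} [AddCommGroup E] [Module ℂ E]

lemma dft_comp_add_right (Φ : ZMod N → E) (a k : ZMod N) :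
    𝓕 (fun j ↦ Φ (j + a)) k = stdAddChar (a * k) • 𝓕 Φ k := by
  simp only [dft_apply, smul_sum, smul_smul]
  refine Fintype.sum_equiv (Equiv.addRight a) _ _ fun j ↦ ?_
  rw [Equiv.coe_addRight, ← AddChar.map_add_eq_mul]
  congr 2
  ring

lemma dft_sum_comp_add_right (S : Finset (ZMod N)) (Φ : ZMod N → E) (k : ZMod N) :
    𝓕 (fun j ↦ ∑ s ∈ S, Φ (j + s)) k = (∑ s ∈ S, stdAddChar (s * k)) • 𝓕 Φ k := by
  rw [← Finset.sum_fn, map_sum, Finset.sum_apply, Finset.sum_smul]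
  exact Finset.sum_congr rfl fun s _ ↦ dft_comp_add_right Φ s k

lemma dft_const_of_ne_zero (c : E) {k : ZMod N} (hk : k ≠ 0) : 𝓕 (fun _ ↦ c) k = 0 := by
  rw [dft_apply, ← Finset.sum_smul]
  simp_rw [← mul_neg]
  rw [AddChar.sum_mulShift _ (isPrimitive_stdAddChar N), if_neg (neg_ne_zero.mpr hk),
    Nat.cast_zero, zero_smul]

lemma periodic_of_dft_support {Φ : ZMod N → E} {a : ZMod N}
    (h : ∀ k, 𝓕 Φ k ≠ 0 → stdAddChar (a * k) = 1) : Function.Periodic Φ a := by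
  suffices (fun j ↦ Φ (j + a)) = Φ from congrFun this
  refine dft.injective (funext fun k ↦ ?_)
  rw [dft_comp_add_right]
  by_cases hk : 𝓕 Φ k = 0
  · rw [hk, smul_zero]
  · rw [h k hk, one_smul]

lemma periodic_of_sum_comp_add_right_eq_const {S : Finset (ZMod N)} {Φ : ZMod N → E} {c : E}
    (hΦ : ∀ j, ∑ s ∈ S, Φ (j + s) = c) {a : ZMod N}
    (ha : ∀ k, ∑ s ∈ S, stdAddChar (s * k) = 0 → stdAddChar (a * k) = 1) :
    Function.Periodic Φ a := by
  refine periodic_of_dft_support fun k hk ↦ ?_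
  rcases eq_or_ne k 0 with rfl | hk0
  · rw [mul_zero, AddChar.map_zero_eq_one]
  have hkill := dft_sum_comp_add_right S Φ k
  rw [funext hΦ, dft_const_of_ne_zero c hk0, eq_comm, smul_eq_zero] at hkill
  exact ha k (hkill.resolve_right hk)

lemma stdAddChar_mul_eq_exp (s k : ZMod N) :
    stdAddChar (s * k) =
      Complex.exp (2 * (Real.pi : ℂ) * Complex.I * (k.val : ℂ) * (s.val : ℂ) / (N : ℂ)) := by
  rw [← natCast_zmod_val s, ← natCast_zmod_val k, ← Nat.cast_mul, ← Int.cast_natCast,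
    stdAddChar_coe, natCast_zmod_val, natCast_zmod_val]
  push_cast
  ring_nf

lemma stdAddChar_natCast_div_mul_eq_one {d : ℕ} (hd : d ∣ N) {k : ZMod N} (hk : d ∣ k.val) :
    stdAddChar (((N / d : ℕ) : ZMod N) * k) = 1 := by
  obtain ⟨t, ht⟩ := hk
  rw [← natCast_zmod_val k, ← Nat.cast_mul, ht, ← mul_assoc, Nat.div_mul_cancel hd,
    Nat.cast_mul, natCast_self, zero_mul, AddChar.map_zero_eq_one]

lemma natCast_div_ne_zero {d : ℕ} (hd : d ∣ N) (hd1 : 1 < d) : ((N / d : ℕ) : ZMod N) ≠ 0 := by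
  have hN := Nat.pos_of_neZero N
  rw [Ne, natCast_eq_zero_iff]
  exact Nat.not_dvd_of_pos_of_lt (Nat.div_pos (Nat.le_of_dvd hN hd) (by omega))
    (Nat.div_lt_self hN hd1)

end ZMod

theorem stmt_3_general (n : ℕ) (hn : 0 < n) (S : Finset (ZMod n))
    (d : ℕ) (hdvd : d ∣ n) (hd1 : 1 < d)
    (hdiv : ∀ j < n,
      (∑ s ∈ S, Complex.exp (2 * (Real.pi : ℂ) * Complex.I * (j : ℂ) * (s.val : ℂ) / (n : ℂ)) = 0)
      → d ∣ j) :
    ¬ ∃ (ℓ : ZMod n → ℕ) (κ : ℕ), 0 < κ ∧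
        Set.BijOn ℓ Set.univ (Set.Icc 1 n) ∧
        ∀ x : ZMod n, ∑ s ∈ S, ℓ (x + s) = κ := by
  rintro ⟨ℓ, κ, -, hbij, hmagic⟩
  have : NeZero n := ⟨hn.ne'⟩
  set m : ZMod n := ((n / d : ℕ) : ZMod n)
  have hperiodic : Function.Periodic (fun x ↦ (ℓ x : ℂ)) m := by
    refine ZMod.periodic_of_sum_comp_add_right_eq_const (c := (κ : ℂ))
      (fun x ↦ by exact_mod_cast hmagic x) fun k hk ↦ ?_
    refine ZMod.stdAddChar_natCast_div_mul_eq_one hdvd (hdiv k.val k.val_lt ?_)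
    simpa only [ZMod.stdAddChar_mul_eq_exp] using hk
  have hℓ : ℓ m = ℓ 0 := by simpa using hperiodic 0
  exact ZMod.natCast_div_ne_zero hdvd hd1 (hbij.injOn (Set.mem_univ _) (Set.mem_univ _) hℓ)

/-- If there is a divisor d of n with 1 < d < n dividing every admissible j
(i.e. every j ∈ {0,...,n-1} with Σ_{s∈S} e^{2πijs/n} = 0), then the circulant
Circ(n;S) is not distance magic. -/
theorem stmt_3 (n : ℕ) (hn : 0 < n) (S : Finset (ZMod n))
    (hSsym : ∀ s ∈ S, -s ∈ S) (h0 : (0 : ZMod n) ∉ S)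
    (d : ℕ) (hdvd : d ∣ n) (hd1 : 1 < d) (hdn : d < n)
    (hdiv : ∀ j < n,
      (∑ s ∈ S, Complex.exp (2 * (Real.pi : ℂ) * Complex.I * (j : ℂ) * (s.val : ℂ) / (n : ℂ)) = 0)
      → d ∣ j) :
    ¬ ∃ (ℓ : ZMod n → ℕ) (κ : ℕ), 0 < κ ∧
        Set.BijOn ℓ Set.univ (Set.Icc 1 n) ∧
        ∀ x : ZMod n, ∑ s ∈ S, ℓ (x + s) = κ :=
  stmt_3_general n hn S d hdvd hd1 hdiv
end

section
/- Let n ≥ 7 and S = {±a, ±b, ±c} ⊂ ℤ_n with |S| = 6 and S generating ℤ_n. Suppose there exist j ∈ {1,...,n-1} and integers k₁, k₂ and a relabeling s₁, s₂, s₃ of elements of S with {±s₁,±s₂,±s₃} = S such that 4 j s₂ = n(1+2k₁) and 2 j (s₁+s₃) = n(1+2k₂) as integers. Then n is divisible by 4 and s₁ + s₃ is even. -/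
/-- If `4 ∣ m * (1+2k)` then `4 ∣ m`, since `1+2k` is odd. -/
lemma aux_four_dvd (m k : ℤ) (h : 4 ∣ m * (1 + 2 * k)) : 4 ∣ m := by
  have hodd : ¬ (2:ℤ) ∣ (1 + 2 * k) := by omega
  have h2 : (2:ℤ) ∣ m := by
    have : (2:ℤ) ∣ m * (1 + 2 * k) := dvd_trans (by norm_num) h
    rcases (Int.prime_two.dvd_mul).mp this with hm | hk
    · exact hm
    · exact absurd hk hodd
  obtain ⟨m', rfl⟩ := h2
  obtain ⟨t, ht⟩ := h
  have h2' : (2:ℤ) ∣ m' := by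
    have : (2:ℤ) ∣ m' * (1 + 2 * k) := ⟨t, by linarith⟩
    rcases (Int.prime_two.dvd_mul).mp this with hm | hk
    · exact hm
    · exact absurd hk hodd
  obtain ⟨m'', rfl⟩ := h2'
  exact ⟨m'', by ring⟩

/-- Type-1 admissible characters: if 4js₂ = n(1+2k₁) and 2j(s₁+s₃) = n(1+2k₂)
for some relabeling s₁,s₂,s₃ (up to sign) of a,b,c, then 4 ∣ n and s₁+s₃ is even. -/
theorem stmt_6 (n : ℕ) (hn : 7 ≤ n) (a b c : ZMod n)
    (hcard : ({a, -a, b, -b, c, -c} : Finset (ZMod n)).card = 6)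
    (hgen : AddSubgroup.closure ({a, b, c} : Set (ZMod n)) = ⊤)
    (j : ℕ) (hj1 : 1 ≤ j) (hjn : j ≤ n - 1)
    (s₁ s₂ s₃ : ℤ)
    (hs₁ : 1 ≤ s₁ ∧ s₁ ≤ (n : ℤ) - 1) (hs₂ : 1 ≤ s₂ ∧ s₂ ≤ (n : ℤ) - 1)
    (hs₃ : 1 ≤ s₃ ∧ s₃ ≤ (n : ℤ) - 1)
    (hset : ({(s₁ : ZMod n), -(s₁ : ZMod n), (s₂ : ZMod n), -(s₂ : ZMod n),
        (s₃ : ZMod n), -(s₃ : ZMod n)} : Finset (ZMod n)) = {a, -a, b, -b, c, -c})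
    (k₁ k₂ : ℤ)
    (h1 : 4 * (j : ℤ) * s₂ = (n : ℤ) * (1 + 2 * k₁))
    (h2 : 2 * (j : ℤ) * (s₁ + s₃) = (n : ℤ) * (1 + 2 * k₂)) :
    4 ∣ n ∧ Even (s₁ + s₃) := by
  have hjpos : (0:ℤ) < (j : ℤ) := by exact_mod_cast hj1
  constructor
  · -- 4 ∣ n over ℤ, then transfer to ℕ
    have hdvd : (4:ℤ) ∣ (n : ℤ) * (1 + 2 * k₁) := ⟨(j : ℤ) * s₂, by linarith⟩
    have : (4:ℤ) ∣ (n : ℤ) := aux_four_dvd _ _ hdvd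
    exact_mod_cast this
  · -- cancel 2j to get 2·s₂·(1+2k₂) = (s₁+s₃)·(1+2k₁)
    have e : (2 * (j:ℤ)) * (2 * s₂ * (1 + 2 * k₂)) =
        (2 * (j:ℤ)) * ((s₁ + s₃) * (1 + 2 * k₁)) := by
      linear_combination (1 + 2 * k₂) * h1 - (1 + 2 * k₁) * h2
    have e' := mul_left_cancel₀ (by positivity : (2 * (j:ℤ)) ≠ 0) e
    have heven : Even ((s₁ + s₃) * (1 + 2 * k₁)) := ⟨s₂ * (1 + 2 * k₂), by linarith⟩
    rcases Int.even_mul.mp heven with h | h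
    · exact h
    · obtain ⟨t, ht⟩ := h; omega
end

section
/- Let d, d' > 1 be odd coprime integers, n₀ = dd', n = 4n₀, and let c with 1 < c < n be the unique solution of c ≡ 0 (mod 4), c ≡ 2 (mod d), c ≡ -2 (mod d'). Then the circulant Circ(n; {±2, ±n₀, ±c}) is distance magic. -/
namespace S8
def g (m : ℕ) (a : ZMod 4) (t : ℕ) : ℕ :=
  if a = 0 then 1 + t
  else if a = 1 then m + 1 + t
  else if a = 2 then 4 * m - t
  else 3 * m - t

lemma cases4 : ∀ b : ZMod 4, b = 0 ∨ b = 1 ∨ b = 2 ∨ b = 3 := by decide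

lemma g0 (m t : ℕ) : g m 0 t = 1 + t := by simp [g]
lemma g1 (m t : ℕ) : g m 1 t = m + 1 + t := by
  simp [g, show (1 : ZMod 4) ≠ 0 from by decide]
lemma g2 (m t : ℕ) : g m 2 t = 4 * m - t := by
  simp [g, show (2 : ZMod 4) ≠ 0 from by decide, show (2 : ZMod 4) ≠ 1 from by decide]
lemma g3 (m t : ℕ) : g m 3 t = 3 * m - t := by
  simp [g, show (3 : ZMod 4) ≠ 0 from by decide, show (3 : ZMod 4) ≠ 1 from by decide,
    show (3 : ZMod 4) ≠ 2 from by decide]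

lemma pair0 (m t : ℕ) (h : t < m) (b : ZMod 4) : g m b t + g m (b + 2) t = 4 * m + 1 := by
  rcases cases4 b with rfl | rfl | rfl | rfl <;>
    simp only [show (0:ZMod 4)+2 = 2 from by decide, show (1:ZMod 4)+2 = 3 from by decide,
      show (2:ZMod 4)+2 = 0 from by decide, show (3:ZMod 4)+2 = 1 from by decide,
      g0, g1, g2, g3] <;> omega

lemma quad0 (m p q r s : ℕ) (h1 : p + s < m) (h2 : p + r < m) (h3 : q + r < m)
    (h4 : q + s < m) (b : ZMod 4) :
    g m b (p + s) + g m (b + 2) (p + r) + g m b (q + r) + g m (b + 2) (q + s)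
      = 2 * (4 * m + 1) := by
  rcases cases4 b with rfl | rfl | rfl | rfl <;>
    simp only [show (0:ZMod 4)+2 = 2 from by decide, show (1:ZMod 4)+2 = 3 from by decide,
      show (2:ZMod 4)+2 = 0 from by decide, show (3:ZMod 4)+2 = 1 from by decide,
      g0, g1, g2, g3] <;> omega

lemma g_bounds (m t : ℕ) (h : t < m) (a : ZMod 4) : 1 ≤ g m a t ∧ g m a t ≤ 4 * m := by
  rcases cases4 a with rfl | rfl | rfl | rfl <;> simp only [g0, g1, g2, g3] <;> omega

lemma g_inj (m t t' : ℕ) (ht : t < m) (ht' : t' < m) (a a' : ZMod 4)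
    (h : g m a t = g m a' t') : a = a' ∧ t = t' := by
  rcases cases4 a with rfl | rfl | rfl | rfl <;> rcases cases4 a' with rfl | rfl | rfl | rfl <;>
    simp only [g0, g1, g2, g3] at h <;>
    first
      | exact ⟨rfl, by omega⟩
      | exact absurd h (by omega)

lemma digits (d' p q s s' : ℕ) (hs : s < d') (hs' : s' < d')
    (h : d' * p + s = d' * q + s') : p = q ∧ s = s' := by
  have h1 : (d' * p + s) % d' = s := by rw [Nat.mul_add_mod]; exact Nat.mod_eq_of_lt hs
  have h2 : (d' * q + s') % d' = s' := by rw [Nat.mul_add_mod]; exact Nat.mod_eq_of_lt hs'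
  have hss : s = s' := by rw [← h1, ← h2, h]
  subst hss
  have h3 : d' * p = d' * q := Nat.add_right_cancel h
  exact ⟨Nat.eq_of_mul_eq_mul_left (by omega) h3, rfl⟩

end S8

/-- For odd coprime d, d' > 1, n₀ = dd', n = 4n₀ and c the solution of
c ≡ 0 (mod 4), c ≡ 2 (mod d), c ≡ -2 (mod d'), the circulant
Circ(n; {±2, ±n₀, ±c}) is distance magic. -/
theorem stmt_8 (d d' n₀ n : ℕ) (hd : 1 < d) (hd' : 1 < d')
    (hodd : Odd d) (hodd' : Odd d') (hcop : Nat.Coprime d d')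
    (hn₀ : n₀ = d * d') (hn : n = 4 * n₀)
    (c : ℕ) (hc1 : 1 < c) (hcn : c < n)
    (hc4 : 4 ∣ c) (hcd : (c : ℤ) ≡ 2 [ZMOD (d : ℤ)]) (hcd' : (c : ℤ) ≡ -2 [ZMOD (d' : ℤ)]) :
    ∃ (ℓ : ZMod n → ℕ) (κ : ℕ), 0 < κ ∧
      Set.BijOn ℓ Set.univ (Set.Icc 1 n) ∧
      ∀ x : ZMod n,
        ∑ s ∈ ({(2 : ZMod n), -(2 : ZMod n), (n₀ : ZMod n), -(n₀ : ZMod n),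
            (c : ZMod n), -(c : ZMod n)} : Finset (ZMod n)), ℓ (x + s) = κ := by
  have hdpos : 0 < d := by omega
  have hd'pos : 0 < d' := by omega
  have hn₀pos : 0 < n₀ := by rw [hn₀]; positivity
  have hnpos : 0 < n := by omega
  haveI : NeZero d := ⟨by omega⟩
  haveI : NeZero d' := ⟨by omega⟩
  haveI : NeZero n := ⟨by omega⟩
  -- divisibilities
  have h4n : 4 ∣ n := ⟨n₀, hn⟩
  have hdn : d ∣ n := ⟨4 * d', by rw [hn, hn₀]; ring⟩
  have hd'n : d' ∣ n := ⟨4 * d, by rw [hn, hn₀]; ring⟩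
  have hdn₀ : d ∣ n₀ := ⟨d', hn₀⟩
  have hd'n₀ : d' ∣ n₀ := ⟨d, by rw [hn₀]; ring⟩
  set A : ZMod n →+* ZMod 4 := ZMod.castHom h4n (ZMod 4) with hA
  set B : ZMod n →+* ZMod d := ZMod.castHom hdn (ZMod d) with hB
  set C : ZMod n →+* ZMod d' := ZMod.castHom hd'n (ZMod d') with hC
  -- images of the connection elements
  have hA2 : A (2 : ZMod n) = 2 := map_ofNat A 2
  have hB2 : B (2 : ZMod n) = 2 := map_ofNat B 2
  have hC2 : C (2 : ZMod n) = 2 := map_ofNat C 2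
  have hAn₀ : A ((n₀ : ℕ) : ZMod n) = ((n₀ : ℕ) : ZMod 4) := map_natCast A n₀
  have hBn₀ : B ((n₀ : ℕ) : ZMod n) = 0 := by
    rw [map_natCast B n₀, ZMod.natCast_eq_zero_iff]; exact hdn₀
  have hCn₀ : C ((n₀ : ℕ) : ZMod n) = 0 := by
    rw [map_natCast C n₀, ZMod.natCast_eq_zero_iff]; exact hd'n₀
  have hAc : A ((c : ℕ) : ZMod n) = 0 := by
    rw [map_natCast A c, ZMod.natCast_eq_zero_iff]; exact hc4
  have hBc : B ((c : ℕ) : ZMod n) = 2 := by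
    rw [map_natCast B c]
    have h1 : ((c : ℤ) : ZMod d) = ((2 : ℤ) : ZMod d) :=
      (ZMod.intCast_eq_intCast_iff _ _ _).mpr hcd
    push_cast at h1
    exact h1
  have hCc : C ((c : ℕ) : ZMod n) = -2 := by
    rw [map_natCast C c]
    have h1 : ((c : ℤ) : ZMod d') = ((-2 : ℤ) : ZMod d') :=
      (ZMod.intCast_eq_intCast_iff _ _ _).mpr hcd'
    push_cast at h1
    exact h1
  -- facts about u = n₀ mod 4
  set u : ZMod 4 := ((n₀ : ℕ) : ZMod 4) with hu
  have hn₀odd : Odd n₀ := by rw [hn₀]; exact hodd.mul hodd'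
  have hu13 : u = 1 ∨ u = 3 := by
    have h2 : n₀ % 2 = 1 := Nat.odd_iff.mp hn₀odd
    have h4 : n₀ % 4 = 1 ∨ n₀ % 4 = 3 := by omega
    rw [hu, ← ZMod.natCast_mod n₀ 4]
    rcases h4 with h | h <;> rw [h] <;> [left; right] <;> norm_num
  -- distinctness of the six connection elements
  have hd4 : ¬ (d ∣ 4) := by
    intro hdvd
    have := Nat.le_of_dvd (by norm_num) hdvd
    have h2 : d % 2 = 1 := Nat.odd_iff.mp hodd
    have hd3 : d = 3 := by omega
    rw [hd3] at hdvd
    omega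
  have hBne : (2 : ZMod d) ≠ -2 := by
    intro h
    have h4 : ((4 : ℕ) : ZMod d) = 0 := by push_cast; linear_combination h
    rw [ZMod.natCast_eq_zero_iff] at h4
    exact hd4 h4
  have q1 : (2 : ZMod n) ≠ -2 := by
    intro h
    have := congrArg B h
    rw [map_neg, hB2] at this
    exact hBne this
  have q2 : (2 : ZMod n) ≠ ((n₀ : ℕ) : ZMod n) := by
    intro h
    have h2 := congrArg A h
    rw [hA2, hAn₀] at h2
    rcases hu13 with h3 | h3 <;> rw [h3] at h2 <;> exact absurd h2 (by decide)
  have q3 : (2 : ZMod n) ≠ -((n₀ : ℕ) : ZMod n) := by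
    intro h
    have h2 := congrArg A h
    rw [map_neg, hA2, hAn₀] at h2
    rcases hu13 with h3 | h3 <;> rw [h3] at h2 <;> exact absurd h2 (by decide)
  have q4 : (2 : ZMod n) ≠ ((c : ℕ) : ZMod n) := by
    intro h
    have h2 := congrArg A h
    rw [hA2, hAc] at h2
    exact absurd h2 (by decide)
  have q5 : (2 : ZMod n) ≠ -((c : ℕ) : ZMod n) := by
    intro h
    have h2 := congrArg A h
    rw [map_neg, hA2, hAc, neg_zero] at h2
    exact absurd h2 (by decide)
  have q6 : (-2 : ZMod n) ≠ ((n₀ : ℕ) : ZMod n) := by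
    intro h
    have h2 := congrArg A h
    rw [map_neg, hA2, hAn₀] at h2
    rcases hu13 with h3 | h3 <;> rw [h3] at h2 <;> exact absurd h2 (by decide)
  have q7 : (-2 : ZMod n) ≠ -((n₀ : ℕ) : ZMod n) := by
    intro h
    have h2 := congrArg A h
    rw [map_neg, map_neg, hA2, hAn₀] at h2
    rcases hu13 with h3 | h3 <;> rw [h3] at h2 <;> exact absurd h2 (by decide)
  have q8 : (-2 : ZMod n) ≠ ((c : ℕ) : ZMod n) := by
    intro h
    have h2 := congrArg A h
    rw [map_neg, hA2, hAc] at h2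
    exact absurd h2 (by decide)
  have q9 : (-2 : ZMod n) ≠ -((c : ℕ) : ZMod n) := by
    intro h
    have h2 := congrArg A h
    rw [map_neg, map_neg, hA2, hAc, neg_zero] at h2
    exact absurd h2 (by decide)
  have q10 : ((n₀ : ℕ) : ZMod n) ≠ -((n₀ : ℕ) : ZMod n) := by
    intro h
    have h2 := congrArg A h
    rw [map_neg, hAn₀] at h2
    rcases hu13 with h3 | h3 <;> rw [h3] at h2 <;> exact absurd h2 (by decide)
  have q11 : ((n₀ : ℕ) : ZMod n) ≠ ((c : ℕ) : ZMod n) := by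
    intro h
    have h2 := congrArg A h
    rw [hAn₀, hAc] at h2
    rcases hu13 with h3 | h3 <;> rw [h3] at h2 <;> exact absurd h2 (by decide)
  have q12 : ((n₀ : ℕ) : ZMod n) ≠ -((c : ℕ) : ZMod n) := by
    intro h
    have h2 := congrArg A h
    rw [map_neg, hAn₀, hAc, neg_zero] at h2
    rcases hu13 with h3 | h3 <;> rw [h3] at h2 <;> exact absurd h2 (by decide)
  have q13 : (-((n₀ : ℕ) : ZMod n)) ≠ ((c : ℕ) : ZMod n) := by
    intro h
    have h2 := congrArg A h
    rw [map_neg, hAn₀, hAc] at h2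
    rcases hu13 with h3 | h3 <;> rw [h3] at h2 <;> exact absurd h2 (by decide)
  have q14 : (-((n₀ : ℕ) : ZMod n)) ≠ -((c : ℕ) : ZMod n) := by
    intro h
    have h2 := congrArg A h
    rw [map_neg, map_neg, hAn₀, hAc, neg_zero] at h2
    rcases hu13 with h3 | h3 <;> rw [h3] at h2 <;> exact absurd h2 (by decide)
  have q15 : ((c : ℕ) : ZMod n) ≠ -((c : ℕ) : ZMod n) := by
    intro h
    have h2 := congrArg B h
    rw [map_neg, hBc] at h2
    exact hBne h2
  -- the labeling
  set ℓ : ZMod n → ℕ := fun x => S8.g n₀ (A x) (d' * (B x).val + (C x).val) with hℓ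
  have tlt2 : ∀ (X : ZMod d) (Y : ZMod d'), d' * X.val + Y.val < n₀ := by
    intro X Y
    have h1 : X.val < d := ZMod.val_lt _
    have h2 : Y.val < d' := ZMod.val_lt _
    calc d' * X.val + Y.val < d' * X.val + d' := by omega
      _ = d' * (X.val + 1) := by ring
      _ ≤ d' * d := Nat.mul_le_mul_left _ (by omega)
      _ = n₀ := by rw [hn₀]; ring
  have tlt : ∀ z : ZMod n, d' * (B z).val + (C z).val < n₀ := fun z => tlt2 (B z) (C z)
  refine ⟨ℓ, 3 * (n + 1), by positivity, ?_, ?_⟩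
  · -- bijectivity
    have hinj : Function.Injective ℓ := by
      intro x y h
      simp only [hℓ] at h
      obtain ⟨ha, ht⟩ := S8.g_inj n₀ _ _ (tlt x) (tlt y) _ _ h
      obtain ⟨hBv, hCv⟩ := S8.digits d' _ _ _ _ (ZMod.val_lt _) (ZMod.val_lt _) ht
      have hBxy : B x = B y := ZMod.val_injective d hBv
      have hCxy : C x = C y := ZMod.val_injective d' hCv
      -- combine congruences
      have h4 : (4 : ℕ) ∣ (x - y).val := by
        have : A (x - y) = 0 := by rw [map_sub, ha, sub_self]
        rwa [← ZMod.natCast_zmod_val (x - y), map_natCast,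
          ZMod.natCast_eq_zero_iff] at this
      have hdv : d ∣ (x - y).val := by
        have : B (x - y) = 0 := by rw [map_sub, hBxy, sub_self]
        rwa [← ZMod.natCast_zmod_val (x - y), map_natCast,
          ZMod.natCast_eq_zero_iff] at this
      have hd'v : d' ∣ (x - y).val := by
        have : C (x - y) = 0 := by rw [map_sub, hCxy, sub_self]
        rwa [← ZMod.natCast_zmod_val (x - y), map_natCast,
          ZMod.natCast_eq_zero_iff] at this
      have hcop4d : Nat.Coprime 4 d := by
        have h2d : Nat.Coprime 2 d := Nat.coprime_two_left.mpr hodd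
        have := h2d.pow_left 2
        norm_num at this
        exact this
      have hcop4d' : Nat.Coprime 4 d' := by
        have h2d : Nat.Coprime 2 d' := Nat.coprime_two_left.mpr hodd'
        have := h2d.pow_left 2
        norm_num at this
        exact this
      have h4d : (4 * d) ∣ (x - y).val := hcop4d.mul_dvd_of_dvd_of_dvd h4 hdv
      have hall : n ∣ (x - y).val := by
        have h8 : (4 * d) * d' ∣ (x - y).val :=
          (Nat.Coprime.mul hcop4d' hcop).mul_dvd_of_dvd_of_dvd h4d hd'v
        obtain ⟨k, hk⟩ := h8
        exact ⟨k, by rw [hk, hn, hn₀]; ring⟩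
      have hv0 : (x - y).val = 0 := by
        rcases Nat.eq_zero_or_pos (x - y).val with h0 | hpos
        · exact h0
        · exact absurd (Nat.le_of_dvd hpos hall) (by have := ZMod.val_lt (x - y); omega)
      have : x - y = 0 := by
        rw [← ZMod.natCast_zmod_val (x - y), hv0, Nat.cast_zero]
      exact sub_eq_zero.mp this
    have hmaps : ∀ x : ZMod n, ℓ x ∈ Set.Icc 1 n := by
      intro x
      have := S8.g_bounds n₀ _ (tlt x) (A x)
      simp only [hℓ, Set.mem_Icc]
      exact ⟨this.1, this.2.trans_eq hn.symm⟩
    refine ⟨fun x _ => hmaps x, hinj.injOn, ?_⟩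
    -- surjectivity via cardinality
    have himg : Finset.image ℓ Finset.univ = Finset.Icc 1 n := by
      apply Finset.eq_of_subset_of_card_le
      · intro y hy
        rw [Finset.mem_image] at hy
        obtain ⟨x, _, rfl⟩ := hy
        have := hmaps x
        rw [Set.mem_Icc] at this
        rw [Finset.mem_Icc]
        exact this
      · rw [Finset.card_image_of_injective _ hinj, Nat.card_Icc]
        simp [ZMod.card]
    intro y hy
    rw [Set.mem_Icc] at hy
    have : y ∈ Finset.image ℓ Finset.univ := by
      rw [himg, Finset.mem_Icc]; exact hy
    rw [Finset.mem_image] at this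
    obtain ⟨x, _, rfl⟩ := this
    exact ⟨x, Set.mem_univ x, rfl⟩
  · -- the magic sum
    intro x
    rw [Finset.sum_insert (by
        simp only [Finset.mem_insert, Finset.mem_singleton]
        push_neg
        exact ⟨q1, q2, q3, q4, q5⟩),
      Finset.sum_insert (by
        simp only [Finset.mem_insert, Finset.mem_singleton]
        push_neg
        exact ⟨q6, q7, q8, q9⟩),
      Finset.sum_insert (by
        simp only [Finset.mem_insert, Finset.mem_singleton]
        push_neg
        exact ⟨q10, q11, q12⟩),
      Finset.sum_insert (by
        simp only [Finset.mem_insert, Finset.mem_singleton]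
        push_neg
        exact ⟨q13, q14⟩),
      Finset.sum_pair q15]
    -- rewrite the six terms
    have hnegA : (-2 : ZMod 4) = 2 := by decide
    have e1 : ℓ (x + 2) = S8.g n₀ (A x + 2) (d' * (B x + 2).val + (C x + 2).val) := by
      simp only [hℓ, map_add, hA2, hB2, hC2]
    have e2 : ℓ (x + -2) = S8.g n₀ (A x + 2) (d' * (B x + -2).val + (C x + -2).val) := by
      simp only [hℓ, map_add, map_neg, hA2, hB2, hC2, hnegA]
    have e3 : ℓ (x + ((n₀ : ℕ) : ZMod n)) = S8.g n₀ (A x + u) (d' * (B x).val + (C x).val) := by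
      simp only [hℓ, map_add, hAn₀, hBn₀, hCn₀, add_zero, ← hu]
    have e4 : ℓ (x + -((n₀ : ℕ) : ZMod n))
        = S8.g n₀ ((A x + u) + 2) (d' * (B x).val + (C x).val) := by
      have hnu : (-u : ZMod 4) = u + 2 := by
        rcases hu13 with h3 | h3 <;> rw [h3] <;> decide
      simp only [hℓ, map_add, map_neg, hAn₀, hBn₀, hCn₀, neg_zero, add_zero, ← hu,
        hnu, ← add_assoc]
    have e5 : ℓ (x + ((c : ℕ) : ZMod n))
        = S8.g n₀ (A x) (d' * (B x + 2).val + (C x + -2).val) := by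
      simp only [hℓ, map_add, hAc, hBc, hCc, add_zero]
    have e6 : ℓ (x + -((c : ℕ) : ZMod n))
        = S8.g n₀ (A x) (d' * (B x + -2).val + (C x + 2).val) := by
      simp only [hℓ, map_add, map_neg, hAc, hBc, hCc, neg_zero, add_zero, neg_neg]
    rw [e1, e2, e3, e4, e5, e6]
    have Hq := S8.quad0 n₀ (d' * (B x + 2).val) (d' * (B x + -2).val)
      ((C x + 2).val) ((C x + -2).val) (tlt2 _ _) (tlt2 _ _) (tlt2 _ _) (tlt2 _ _) (A x)
    have Hp := S8.pair0 n₀ (d' * (B x).val + (C x).val) (tlt x) (A x + u)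
    omega
end

section
/- Let d, d' be coprime integers with 1 < d < d', both coprime to 6, let n₀ = dd', n = 3n₀, let δ ∈ {-1,1} with n₀ ≡ δ (mod 3), and let c ∈ {1,...,n-1} be the unique solution of c ≡ 0 (mod 3), c ≡ 1 (mod d), c ≡ -1 (mod d'). Then the circulant Circ(n; {±1, ±(n₀+δ), ±c}) is distance magic. -/
/-- auxiliary digit permutation used for the distance magic labeling. -/
def stmt9gf (d h j a : ℕ) : ℕ :=
  if a = 0 then j
  else if a = 1 then (j + h) % d
  else if j ≤ h then 2 * (h - j) else 4 * h + 1 - 2 * j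

lemma stmt9gf_lt (d h j a : ℕ) (hd : d = 2 * h + 1) (hj : j < d) : stmt9gf d h j a < d := by
  unfold stmt9gf
  split
  · omega
  split
  · exact Nat.mod_lt _ (by omega)
  split <;> omega

lemma stmt9gf_mod1 (d h j : ℕ) (hd : d = 2 * h + 1) (hj : j < d) :
    (j + h) % d = if j + h < d then j + h else j + h - d := by
  split
  · exact Nat.mod_eq_of_lt ‹_›
  · rw [Nat.mod_eq_sub_mod (by omega)]
    exact Nat.mod_eq_of_lt (by omega)

lemma stmt9gf_sum (d h j : ℕ) (hd : d = 2 * h + 1) (hj : j < d) :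
    stmt9gf d h j 0 + stmt9gf d h j 1 + stmt9gf d h j 2 = 3 * h := by
  have h1 := stmt9gf_mod1 d h j hd hj
  unfold stmt9gf
  simp only [reduceIte, OfNat.ofNat_ne_zero, OfNat.ofNat_ne_one, one_ne_zero]
  split at h1 <;> rw [h1] <;> split <;> omega

lemma stmt9gf_inj (d h j j' a : ℕ) (hd : d = 2 * h + 1) (hj : j < d) (hj' : j' < d)
    (heq : stmt9gf d h j a = stmt9gf d h j' a) : j = j' := by
  have h1 := stmt9gf_mod1 d h j hd hj
  have h2 := stmt9gf_mod1 d h j' hd hj'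
  unfold stmt9gf at heq
  split at heq
  · exact heq
  split at heq
  · rw [h1, h2] at heq
    split at heq <;> split at heq <;> omega
  · split at heq <;> split at heq <;> omega

/-- `(M - x) % q = q - r` when `q ∣ M`, `x % q = r`, `0 < r`, `x ≤ M`. -/
lemma stmt9_mod_sub {q M x r : ℕ} (hq : 1 < q) (hdvd : q ∣ M) (hxM : x ≤ M)
    (hx : x % q = r) (hr : 0 < r) : (M - x) % q = q - r := by
  have hrq : r < q := hx ▸ Nat.mod_lt _ (by omega)
  have hM0 : (M : ℤ) % q = 0 := Int.emod_eq_zero_of_dvd (by exact_mod_cast hdvd)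
  have hxz : (x : ℤ) % q = r := by
    have h' : ((x % q : ℕ) : ℤ) = ((r : ℕ) : ℤ) := by rw [hx]
    push_cast at h'
    exact h'
  have hstep : ((M : ℤ) - x) % q = (q : ℤ) - r := by
    rw [Int.sub_emod, hM0, hxz]
    calc ((0 : ℤ) - r) % q = ((0 - r) + q * 1) % q := (Int.add_mul_emod_self_left _ _ _).symm
    _ = ((q : ℤ) - r) % q := by ring_nf
    _ = (q : ℤ) - r := Int.emod_eq_of_lt (by omega) (by omega)
  have hcast : (((M - x) % q : ℕ) : ℤ) = (q : ℤ) - r := by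
    push_cast [hxM]
    exact hstep
  omega

/-- digit uniqueness -/
lemma stmt9_digit {m a b A B : ℕ} (hA : A < m) (hB : B < m)
    (h : m * a + A = m * b + B) : a = b ∧ A = B := by
  have hm : 0 < m := by omega
  have h1 : (m * a + A) / m = a := by rw [Nat.mul_add_div hm, Nat.div_eq_of_lt hA, add_zero]
  have h2 : (m * b + B) / m = b := by rw [Nat.mul_add_div hm, Nat.div_eq_of_lt hB, add_zero]
  have hab : a = b := by rw [← h1, ← h2, h]
  subst hab
  exact ⟨rfl, by omega⟩

/-- For coprime 1 < d < d', both coprime to 6, n₀ = dd', n = 3n₀,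
δ = ±1 with n₀ ≡ δ (mod 3), and c the solution of c ≡ 0 (mod 3),
c ≡ 1 (mod d), c ≡ -1 (mod d'), the circulant Circ(n; {±1, ±(n₀+δ), ±c})
is distance magic. -/
theorem stmt_9 (d d' n₀ n : ℕ) (hd : 1 < d) (hdd' : d < d')
    (hcop : Nat.Coprime d d') (h6 : Nat.Coprime d 6) (h6' : Nat.Coprime d' 6)
    (hn₀ : n₀ = d * d') (hn : n = 3 * n₀)
    (δ : ℤ) (hδ : δ = 1 ∨ δ = -1) (hδn₀ : (n₀ : ℤ) ≡ δ [ZMOD 3])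
    (c : ℕ) (hc1 : 1 ≤ c) (hcn : c ≤ n - 1)
    (hc3 : 3 ∣ c) (hcd : (c : ℤ) ≡ 1 [ZMOD (d : ℤ)]) (hcd' : (c : ℤ) ≡ -1 [ZMOD (d' : ℤ)]) :
    ∃ (ℓ : ZMod n → ℕ) (κ : ℕ), 0 < κ ∧
      Set.BijOn ℓ Set.univ (Set.Icc 1 n) ∧
      ∀ x : ZMod n,
        ∑ s ∈ ({(1 : ZMod n), -(1 : ZMod n),
            (((n₀ : ℤ) + δ : ℤ) : ZMod n), -(((n₀ : ℤ) + δ : ℤ) : ZMod n),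
            (c : ZMod n), -(c : ZMod n)} : Finset (ZMod n)), ℓ (x + s) = κ := by
  -- basic arithmetic facts
  have h2d : ¬ (2 ∣ d) := by
    intro h2
    have hcp : Nat.Coprime d 2 := Nat.Coprime.coprime_dvd_right (by norm_num) h6
    have : (2 : ℕ) ∣ 1 := hcp ▸ Nat.dvd_gcd h2 dvd_rfl
    omega
  have h3d : ¬ (3 ∣ d) := by
    intro h3
    have hcp : Nat.Coprime d 3 := Nat.Coprime.coprime_dvd_right (by norm_num) h6
    have : (3 : ℕ) ∣ 1 := hcp ▸ Nat.dvd_gcd h3 dvd_rfl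
    omega
  have h2d' : ¬ (2 ∣ d') := by
    intro h2
    have hcp : Nat.Coprime d' 2 := Nat.Coprime.coprime_dvd_right (by norm_num) h6'
    have : (2 : ℕ) ∣ 1 := hcp ▸ Nat.dvd_gcd h2 dvd_rfl
    omega
  have h3d' : ¬ (3 ∣ d') := by
    intro h3
    have hcp : Nat.Coprime d' 3 := Nat.Coprime.coprime_dvd_right (by norm_num) h6'
    have : (3 : ℕ) ∣ 1 := hcp ▸ Nat.dvd_gcd h3 dvd_rfl
    omega
  have hd5 : 5 ≤ d := by omega
  have hd'7 : 7 ≤ d' := by omega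
  have hn₀35 : 35 ≤ n₀ := hn₀ ▸ Nat.mul_le_mul hd5 hd'7
  have hn105 : 105 ≤ n := by omega
  haveI : NeZero n := ⟨by omega⟩
  have hdh : d = 2 * (d / 2) + 1 := by omega
  have hd'h : d' = 2 * (d' / 2) + 1 := by omega
  -- divisibility facts
  have hdn : d ∣ n := ⟨3 * d', by rw [hn, hn₀]; ring⟩
  have hd'n : d' ∣ n := ⟨3 * d, by rw [hn, hn₀]; ring⟩
  have h3n : (3 : ℕ) ∣ n := ⟨n₀, hn⟩
  -- residues of c
  have hc3' : c % 3 = 0 := by omega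
  have hcd1 : c % d = 1 := by
    have h' : (c : ℤ) % d = 1 % d := hcd
    have h1 : (1 : ℤ) % d = 1 := Int.emod_eq_of_lt (by omega) (by exact_mod_cast hd)
    have h2 : ((c % d : ℕ) : ℤ) = 1 := by push_cast; rw [h', h1]
    omega
  have hcd'1 : c % d' = d' - 1 := by
    have h' : (c : ℤ) % d' = (-1) % d' := hcd'
    have h1 : (-1 : ℤ) % d' = (d' : ℤ) - 1 := by
      calc (-1 : ℤ) % d' = (-1 + (d' : ℤ) * 1) % d' := (Int.add_mul_emod_self_left _ _ _).symm
      _ = ((d' : ℤ) - 1) % d' := by ring_nf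
      _ = (d' : ℤ) - 1 := Int.emod_eq_of_lt (by omega) (by omega)
    have h2 : ((c % d' : ℕ) : ℤ) = (d' : ℤ) - 1 := by push_cast; rw [h', h1]
    omega
  have hcn' : c < n := by omega
  -- the labeling
  set L : ZMod n → ℕ := fun x =>
    1 + n₀ * (x.val % 3) + d' * stmt9gf d (d / 2) (x.val % d) (x.val % 3)
      + stmt9gf d' (d' / 2) (x.val % d') (x.val % 3) with hL
  -- key modular computation for shifted values
  have key : ∀ (m : ℕ), m < n → ∀ (x : ZMod n) (q : ℕ), 0 < q → q ∣ n →
      (x + (m : ZMod n)).val % q = (x.val % q + m % q) % q := by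
    intro m hm x q hq hqn
    rw [ZMod.val_add, ZMod.val_cast_of_lt hm, Nat.mod_mod_of_dvd _ hqn, Nat.add_mod]
  -- negatives of casts
  have negc : ∀ m : ℕ, m ≤ n → (-(m : ZMod n)) = ((n - m : ℕ) : ZMod n) := by
    intro m hm
    have h0 : ((m : ℕ) : ZMod n) + ((n - m : ℕ) : ZMod n) = 0 := by
      rw [← Nat.cast_add, ← Nat.add_sub_assoc hm, Nat.add_sub_cancel_left, ZMod.natCast_self]
    exact (neg_eq_of_add_eq_zero_right h0)
  have castinj : ∀ m m' : ℕ, m < n → m' < n → ((m : ℕ) : ZMod n) = ((m' : ℕ) : ZMod n) → m = m' := by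
    intro m m' hm hm' h
    rw [← ZMod.val_cast_of_lt hm, ← ZMod.val_cast_of_lt hm', h]
  -- term computation
  have term : ∀ (m : ℕ), m < n → ∀ x : ZMod n,
      L (x + (m : ZMod n)) =
        1 + n₀ * ((x.val % 3 + m % 3) % 3)
          + d' * stmt9gf d (d / 2) ((x.val % d + m % d) % d) ((x.val % 3 + m % 3) % 3)
          + stmt9gf d' (d' / 2) ((x.val % d' + m % d') % d') ((x.val % 3 + m % 3) % 3) := by
    intro m hm x
    rw [hL]
    simp only []
    rw [key m hm x 3 (by omega) h3n, key m hm x d (by omega) hdn, key m hm x d' (by omega) hd'n]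
  -- column sums
  have hdd : d' * d = n₀ := by rw [hn₀]; ring
  -- MapsTo
  have hmaps : ∀ x : ZMod n, L x ∈ Set.Icc 1 n := by
    intro x
    have hX3 : x.val % 3 < 3 := Nat.mod_lt _ (by omega)
    have g1 := stmt9gf_lt d (d / 2) (x.val % d) (x.val % 3) hdh (Nat.mod_lt _ (by omega))
    have g2 := stmt9gf_lt d' (d' / 2) (x.val % d') (x.val % 3) hd'h (Nat.mod_lt _ (by omega))
    have hjoint : d' * stmt9gf d (d / 2) (x.val % d) (x.val % 3)
        + stmt9gf d' (d' / 2) (x.val % d') (x.val % 3) + 1 ≤ d' * d := by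
      calc d' * stmt9gf d (d / 2) (x.val % d) (x.val % 3)
          + stmt9gf d' (d' / 2) (x.val % d') (x.val % 3) + 1
          ≤ d' * stmt9gf d (d / 2) (x.val % d) (x.val % 3) + d' := by omega
      _ = d' * (stmt9gf d (d / 2) (x.val % d) (x.val % 3) + 1) := by rw [Nat.mul_succ]
      _ ≤ d' * d := Nat.mul_le_mul_left d' (by omega)
    have hX3' : n₀ * (x.val % 3) ≤ n₀ * 2 := Nat.mul_le_mul_left _ (by omega)
    simp only [hL, Set.mem_Icc]
    omega
  -- Injective
  have hinj : Function.Injective L := by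
    intro x y hxy
    simp only [hL] at hxy
    have g1x := stmt9gf_lt d (d / 2) (x.val % d) (x.val % 3) hdh (Nat.mod_lt _ (by omega))
    have g2x := stmt9gf_lt d' (d' / 2) (x.val % d') (x.val % 3) hd'h (Nat.mod_lt _ (by omega))
    have g1y := stmt9gf_lt d (d / 2) (y.val % d) (y.val % 3) hdh (Nat.mod_lt _ (by omega))
    have g2y := stmt9gf_lt d' (d' / 2) (y.val % d') (y.val % 3) hd'h (Nat.mod_lt _ (by omega))
    have hjx : d' * stmt9gf d (d / 2) (x.val % d) (x.val % 3)
        + stmt9gf d' (d' / 2) (x.val % d') (x.val % 3) + 1 ≤ d' * d := by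
      calc d' * stmt9gf d (d / 2) (x.val % d) (x.val % 3)
          + stmt9gf d' (d' / 2) (x.val % d') (x.val % 3) + 1
          ≤ d' * stmt9gf d (d / 2) (x.val % d) (x.val % 3) + d' := by omega
      _ = d' * (stmt9gf d (d / 2) (x.val % d) (x.val % 3) + 1) := by rw [Nat.mul_succ]
      _ ≤ d' * d := Nat.mul_le_mul_left d' (by omega)
    have hjy : d' * stmt9gf d (d / 2) (y.val % d) (y.val % 3)
        + stmt9gf d' (d' / 2) (y.val % d') (y.val % 3) + 1 ≤ d' * d := by
      calc d' * stmt9gf d (d / 2) (y.val % d) (y.val % 3)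
          + stmt9gf d' (d' / 2) (y.val % d') (y.val % 3) + 1
          ≤ d' * stmt9gf d (d / 2) (y.val % d) (y.val % 3) + d' := by omega
      _ = d' * (stmt9gf d (d / 2) (y.val % d) (y.val % 3) + 1) := by rw [Nat.mul_succ]
      _ ≤ d' * d := Nat.mul_le_mul_left d' (by omega)
    have hxy' : n₀ * (x.val % 3)
          + (d' * stmt9gf d (d / 2) (x.val % d) (x.val % 3)
            + stmt9gf d' (d' / 2) (x.val % d') (x.val % 3))
        = n₀ * (y.val % 3)
          + (d' * stmt9gf d (d / 2) (y.val % d) (y.val % 3)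
            + stmt9gf d' (d' / 2) (y.val % d') (y.val % 3)) := by omega
    obtain ⟨ha, hR⟩ := stmt9_digit (by omega) (by omega) hxy'
    obtain ⟨hG, hK⟩ := stmt9_digit g2x g2y hR
    rw [ha] at hG hK
    have hxd : x.val % d = y.val % d :=
      stmt9gf_inj d (d / 2) _ _ _ hdh (Nat.mod_lt _ (by omega)) (Nat.mod_lt _ (by omega)) hG
    have hxd' : x.val % d' = y.val % d' :=
      stmt9gf_inj d' (d' / 2) _ _ _ hd'h (Nat.mod_lt _ (by omega)) (Nat.mod_lt _ (by omega)) hK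
    have cop3d : Nat.Coprime 3 d := (Nat.Coprime.coprime_dvd_right (by norm_num) h6).symm
    have cop3d' : Nat.Coprime 3 d' := (Nat.Coprime.coprime_dvd_right (by norm_num) h6').symm
    have cop3 : Nat.Coprime 3 (d * d') := Nat.Coprime.mul_right cop3d cop3d'
    have m1 : x.val ≡ y.val [MOD 3] := ha
    have m2 : x.val ≡ y.val [MOD d] := hxd
    have m3 : x.val ≡ y.val [MOD d'] := hxd'
    have mdd' : x.val ≡ y.val [MOD d * d'] := (Nat.modEq_and_modEq_iff_modEq_mul hcop).mp ⟨m2, m3⟩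
    have mn : x.val ≡ y.val [MOD n] := by
      have h' : x.val ≡ y.val [MOD 3 * (d * d')] :=
        (Nat.modEq_and_modEq_iff_modEq_mul cop3).mp ⟨m1, mdd'⟩
      have he : 3 * (d * d') = n := by rw [hn, hn₀]
      exact he ▸ h'
    have hv : x.val = y.val := by
      have hx' := ZMod.val_lt x
      have hy' := ZMod.val_lt y
      unfold Nat.ModEq at mn
      rwa [Nat.mod_eq_of_lt hx', Nat.mod_eq_of_lt hy'] at mn
    exact ZMod.val_injective n hv
  -- the magic sum, with abstract "e"
  have main : ∀ e : ℕ, 0 < e → e < n → e % 3 = 2 → e % d = 1 → e % d' = 1 →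
      ∀ x : ZMod n,
        ∑ s ∈ ({((1 : ℕ) : ZMod n), ((n - 1 : ℕ) : ZMod n), ((e : ℕ) : ZMod n),
            ((n - e : ℕ) : ZMod n), ((c : ℕ) : ZMod n), ((n - c : ℕ) : ZMod n)} :
            Finset (ZMod n)), L (x + s) = 3 * (n + 1) := by
    intro e he0 hen he3 hed hed' x
    have h1d : 1 % d = 1 := Nat.mod_eq_of_lt (by omega)
    have h1d' : 1 % d' = 1 := Nat.mod_eq_of_lt (by omega)
    have h13 : 1 % 3 = 1 := rfl
    have hn13 : (n - 1) % 3 = 2 := by omega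
    have hn1d : (n - 1) % d = d - 1 := stmt9_mod_sub hd hdn (by omega) h1d (by omega)
    have hn1d' : (n - 1) % d' = d' - 1 := stmt9_mod_sub (by omega) hd'n (by omega) h1d' (by omega)
    have hne3 : (n - e) % 3 = 1 := by omega
    have hned : (n - e) % d = d - 1 := stmt9_mod_sub hd hdn (by omega) hed (by omega)
    have hned' : (n - e) % d' = d' - 1 := stmt9_mod_sub (by omega) hd'n (by omega) hed' (by omega)
    have hnc3 : (n - c) % 3 = 0 := by omega
    have hncd : (n - c) % d = d - 1 := stmt9_mod_sub hd hdn (by omega) hcd1 (by omega)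
    have hncd' : (n - c) % d' = 1 := by
      have h := stmt9_mod_sub (show 1 < d' by omega) hd'n (by omega) hcd'1 (by omega)
      omega
    -- distinctness
    have ne2 : ∀ m m' : ℕ, m < n → m' < n → (m % 3 ≠ m' % 3 ∨ m % d ≠ m' % d) →
        ((m : ℕ) : ZMod n) ≠ ((m' : ℕ) : ZMod n) := by
      intro m m' hm hm' hne h
      have heq := castinj m m' hm hm' h
      rcases hne with h' | h' <;> exact h' (by rw [heq])
    have H1 : ((1 : ℕ) : ZMod n) ∉ ({((n - 1 : ℕ) : ZMod n), ((e : ℕ) : ZMod n),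
        ((n - e : ℕ) : ZMod n), ((c : ℕ) : ZMod n), ((n - c : ℕ) : ZMod n)} : Finset (ZMod n)) := by
      simp only [Finset.mem_insert, Finset.mem_singleton]
      push_neg
      refine ⟨ne2 1 (n - 1) (by omega) (by omega) (Or.inl (by omega)),
        ne2 1 e (by omega) (by omega) (Or.inl (by omega)),
        ne2 1 (n - e) (by omega) (by omega) (Or.inr (by rw [h1d, hned]; omega)),
        ne2 1 c (by omega) (by omega) (Or.inl (by omega)),
        ne2 1 (n - c) (by omega) (by omega) (Or.inl (by omega))⟩
    have H2 : ((n - 1 : ℕ) : ZMod n) ∉ ({((e : ℕ) : ZMod n),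
        ((n - e : ℕ) : ZMod n), ((c : ℕ) : ZMod n), ((n - c : ℕ) : ZMod n)} : Finset (ZMod n)) := by
      simp only [Finset.mem_insert, Finset.mem_singleton]
      push_neg
      refine ⟨ne2 (n - 1) e (by omega) (by omega) (Or.inr (by rw [hn1d, hed]; omega)),
        ne2 (n - 1) (n - e) (by omega) (by omega) (Or.inl (by omega)),
        ne2 (n - 1) c (by omega) (by omega) (Or.inl (by omega)),
        ne2 (n - 1) (n - c) (by omega) (by omega) (Or.inl (by omega))⟩
    have H3 : ((e : ℕ) : ZMod n) ∉ ({((n - e : ℕ) : ZMod n), ((c : ℕ) : ZMod n),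
        ((n - c : ℕ) : ZMod n)} : Finset (ZMod n)) := by
      simp only [Finset.mem_insert, Finset.mem_singleton]
      push_neg
      refine ⟨ne2 e (n - e) (by omega) (by omega) (Or.inl (by omega)),
        ne2 e c (by omega) (by omega) (Or.inl (by omega)),
        ne2 e (n - c) (by omega) (by omega) (Or.inl (by omega))⟩
    have H4 : ((n - e : ℕ) : ZMod n) ∉ ({((c : ℕ) : ZMod n),
        ((n - c : ℕ) : ZMod n)} : Finset (ZMod n)) := by
      simp only [Finset.mem_insert, Finset.mem_singleton]
      push_neg
      refine ⟨ne2 (n - e) c (by omega) (by omega) (Or.inl (by omega)),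
        ne2 (n - e) (n - c) (by omega) (by omega) (Or.inl (by omega))⟩
    have H5 : ((c : ℕ) : ZMod n) ∉ ({((n - c : ℕ) : ZMod n)} : Finset (ZMod n)) := by
      simp only [Finset.mem_singleton]
      exact ne2 c (n - c) (by omega) (by omega) (Or.inr (by rw [hcd1, hncd]; omega))
    rw [Finset.sum_insert H1, Finset.sum_insert H2, Finset.sum_insert H3,
      Finset.sum_insert H4, Finset.sum_insert H5, Finset.sum_singleton]
    rw [term 1 (by omega) x, term (n - 1) (by omega) x, term e (by omega) x,
      term (n - e) (by omega) x, term c (by omega) x, term (n - c) (by omega) x]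
    simp only [h13, h1d, h1d', hn13, hn1d, hn1d', he3, hed, hed', hne3, hned, hned',
      hc3', hcd1, hcd'1, hnc3, hncd, hncd']
    obtain ⟨u, hu⟩ : ∃ u, d / 2 = u := ⟨_, rfl⟩
    obtain ⟨w, hw⟩ : ∃ w, d' / 2 = w := ⟨_, rfl⟩
    rw [hu] at hdh
    rw [hw] at hd'h
    rw [hu, hw]
    set pd := (x.val % d + 1) % d with hpddef
    set qd := (x.val % d + (d - 1)) % d with hqddef
    set pd' := (x.val % d' + 1) % d' with hpd'def
    set qd' := (x.val % d' + (d' - 1)) % d' with hqd'def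
    have hpd : pd < d := Nat.mod_lt _ (by omega)
    have hqd : qd < d := Nat.mod_lt _ (by omega)
    have hpd' : pd' < d' := Nat.mod_lt _ (by omega)
    have hqd' : qd' < d' := Nat.mod_lt _ (by omega)
    have Sp := stmt9gf_sum d u pd hdh hpd
    have Sq := stmt9gf_sum d u qd hdh hqd
    have Sp' := stmt9gf_sum d' w pd' hd'h hpd'
    have Sq' := stmt9gf_sum d' w qd' hd'h hqd'
    have ha : x.val % 3 = 0 ∨ x.val % 3 = 1 ∨ x.val % 3 = 2 := by omega
    have hdhz : (d : ℤ) = 2 * (u : ℤ) + 1 := by exact_mod_cast hdh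
    have hd'hz : (d' : ℤ) = 2 * (w : ℤ) + 1 := by exact_mod_cast hd'h
    have hnz : (n : ℤ) = 3 * (n₀ : ℤ) := by exact_mod_cast hn
    have hn₀z : (n₀ : ℤ) = (d : ℤ) * (d' : ℤ) := by exact_mod_cast hn₀
    zify at Sp Sq Sp' Sq'
    rcases ha with h | h | h <;> rw [h] <;> norm_num <;> zify <;>
      linear_combination (d' : ℤ) * Sp + (d' : ℤ) * Sq + Sp' + Sq'
        - 3 * hnz - 3 * hn₀z - 3 * (d' : ℤ) * hdhz - 3 * hd'hz
  refine ⟨L, 3 * (n + 1), by omega, ?_, ?_⟩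
  · -- BijOn
    have hrange : Set.range L = Set.Icc 1 n := by
      apply Set.eq_of_subset_of_ncard_le
      · rintro y ⟨x, rfl⟩
        exact hmaps x
      · have h1 : (Set.Icc 1 n).ncard = n := by
          rw [Set.ncard_eq_toFinset_card']
          simp
        have h2 : (Set.range L).ncard = n := by
          rw [← Nat.card_coe_set_eq, Nat.card_range_of_injective hinj, Nat.card_zmod]
        omega
      · exact Set.finite_Icc _ _
    exact ⟨fun x _ => hmaps x, hinj.injOn, fun y hy => by
      rw [Set.image_univ, hrange]; exact hy⟩
  · -- the magic sum
    intro x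
    rcases hδ with rfl | rfl
    · -- δ = 1
      have hn₀3 : n₀ % 3 = 1 := by
        have h' : (n₀ : ℤ) % 3 = 1 % 3 := hδn₀
        omega
      have hn₀d : n₀ % d = 0 := by rw [hn₀]; exact Nat.mul_mod_right d d'
      have hn₀d' : n₀ % d' = 0 := by rw [hn₀, mul_comm]; exact Nat.mul_mod_right d' d
      have hed : (n₀ + 1) % d = 1 := by
        rw [Nat.add_mod, hn₀d, Nat.mod_eq_of_lt (show 1 < d by omega)]
        exact Nat.mod_eq_of_lt (by omega)
      have hed' : (n₀ + 1) % d' = 1 := by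
        rw [Nat.add_mod, hn₀d', Nat.mod_eq_of_lt (show 1 < d' by omega)]
        exact Nat.mod_eq_of_lt (by omega)
      rw [show (((n₀ : ℤ) + 1 : ℤ) : ZMod n) = (((n₀ + 1 : ℕ)) : ZMod n) by push_cast; ring]
      rw [show (1 : ZMod n) = ((1 : ℕ) : ZMod n) from (Nat.cast_one).symm]
      rw [negc 1 (by omega), negc (n₀ + 1) (by omega), negc c (by omega)]
      exact main (n₀ + 1) (by omega) (by omega) (by omega) hed hed' x
    · -- δ = -1
      have hn₀3 : n₀ % 3 = 2 := by
        have h' : (n₀ : ℤ) % 3 = (-1) % 3 := hδn₀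
        omega
      have h2n₀d : (2 * n₀) % d = 0 := by
        rw [hn₀, show 2 * (d * d') = d * (2 * d') by ring]
        exact Nat.mul_mod_right d (2 * d')
      have h2n₀d' : (2 * n₀) % d' = 0 := by
        rw [hn₀, show 2 * (d * d') = d' * (2 * d) by ring]
        exact Nat.mul_mod_right d' (2 * d)
      have hed : (2 * n₀ + 1) % d = 1 := by
        rw [Nat.add_mod, h2n₀d, Nat.mod_eq_of_lt (show 1 < d by omega)]
        exact Nat.mod_eq_of_lt (by omega)
      have hed' : (2 * n₀ + 1) % d' = 1 := by
        rw [Nat.add_mod, h2n₀d', Nat.mod_eq_of_lt (show 1 < d' by omega)]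
        exact Nat.mod_eq_of_lt (by omega)
      rw [show (((n₀ : ℤ) + -1 : ℤ) : ZMod n) = (((n₀ - 1 : ℕ)) : ZMod n) by
        push_cast [Nat.cast_sub (show 1 ≤ n₀ by omega)]; ring]
      rw [show ((n₀ - 1 : ℕ) : ZMod n) = -((2 * n₀ + 1 : ℕ) : ZMod n) by
        rw [negc (2 * n₀ + 1) (by omega), show n - (2 * n₀ + 1) = n₀ - 1 by omega]]
      simp only [neg_neg]
      rw [Finset.insert_comm (-(((2 * n₀ + 1 : ℕ)) : ZMod n)) (((2 * n₀ + 1 : ℕ)) : ZMod n)]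
      rw [show (1 : ZMod n) = ((1 : ℕ) : ZMod n) from (Nat.cast_one).symm]
      rw [negc 1 (by omega), negc (2 * n₀ + 1) (by omega), negc c (by omega)]
      exact main (2 * n₀ + 1) (by omega) (by omega) (by omega) hed hed' x
end

section
/- For m ≥ 3, the circulant Circ(4m; {±1, ±m, ±(2m-1)}) (isomorphic to Ml_m[2K₁]) is distance magic. -/
/-- For m ≥ 3, the circulant Circ(4m; {±1, ±m, ±(2m-1)}) ≅ Ml_m[2K₁] is
distance magic. -/
theorem stmt_10 (m : ℕ) (hm : 3 ≤ m) :
    ∃ (ℓ : ZMod (4 * m) → ℕ) (κ : ℕ), 0 < κ ∧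
      Set.BijOn ℓ Set.univ (Set.Icc 1 (4 * m)) ∧
      ∀ x : ZMod (4 * m),
        ∑ s ∈ ({(1 : ZMod (4 * m)), -(1 : ZMod (4 * m)),
            (m : ZMod (4 * m)), -(m : ZMod (4 * m)),
            ((2 * m - 1 : ℕ) : ZMod (4 * m)), -((2 * m - 1 : ℕ) : ZMod (4 * m))} : Finset (ZMod (4 * m))),
          ℓ (x + s) = κ := by
  haveI : NeZero (4 * m) := ⟨by omega⟩
  set ℓ : ZMod (4 * m) → ℕ :=
    fun x => if x.val < 2 * m then x.val + 1 else 6 * m - x.val with hℓ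
  -- cast injectivity below 4m
  have castinj : ∀ a b : ℕ, a < 4 * m → b < 4 * m →
      ((a : ZMod (4 * m)) = (b : ZMod (4 * m))) → a = b := by
    intro a b ha hb h
    have := congrArg ZMod.val h
    rwa [ZMod.val_cast_of_lt ha, ZMod.val_cast_of_lt hb] at this
  -- rewrite the negative elements as natural casts
  have hself : ((4 * m : ℕ) : ZMod (4 * m)) = 0 := ZMod.natCast_self _
  have e1 : -(1 : ZMod (4 * m)) = ((4 * m - 1 : ℕ) : ZMod (4 * m)) := by
    rw [Nat.cast_sub (by omega)]
    push_cast [hself]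
    ring
  have e2 : -((m : ℕ) : ZMod (4 * m)) = ((3 * m : ℕ) : ZMod (4 * m)) := by
    have : ((3 * m : ℕ) : ZMod (4 * m)) + ((m : ℕ) : ZMod (4 * m)) = 0 := by
      rw [← Nat.cast_add]
      have : 3 * m + m = 4 * m := by ring
      rw [this, hself]
    linear_combination -this
  have e3 : -(((2 * m - 1 : ℕ)) : ZMod (4 * m)) = ((2 * m + 1 : ℕ) : ZMod (4 * m)) := by
    have : ((2 * m + 1 : ℕ) : ZMod (4 * m)) + ((2 * m - 1 : ℕ) : ZMod (4 * m)) = 0 := by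
      rw [← Nat.cast_add]
      have : 2 * m + 1 + (2 * m - 1) = 4 * m := by omega
      rw [this, hself]
    linear_combination -this
  have e0 : (1 : ZMod (4 * m)) = ((1 : ℕ) : ZMod (4 * m)) := by push_cast; ring
  have em : ((m : ℕ) : ZMod (4 * m)) = ((m : ℕ) : ZMod (4 * m)) := rfl
  -- key antipodal lemma
  have key : ∀ y : ZMod (4 * m), ℓ y + ℓ (y + ((2 * m : ℕ) : ZMod (4 * m))) = 4 * m + 1 := by
    intro y
    have hv : y.val < 4 * m := ZMod.val_lt y
    have hval : (y + ((2 * m : ℕ) : ZMod (4 * m))).val = (y.val + 2 * m) % (4 * m) := by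
      rw [ZMod.val_add, ZMod.val_cast_of_lt (by omega)]
    rcases lt_or_ge y.val (2 * m) with h | h
    · have hmod : (y.val + 2 * m) % (4 * m) = y.val + 2 * m := Nat.mod_eq_of_lt (by omega)
      simp only [hℓ, hval, hmod]
      rw [if_pos h, if_neg (by omega)]
      omega
    · have hmod : (y.val + 2 * m) % (4 * m) = y.val - 2 * m := by
        rw [Nat.mod_eq_sub_mod (by omega)]
        have : y.val + 2 * m - 4 * m = y.val - 2 * m := by omega
        rw [this, Nat.mod_eq_of_lt (by omega)]
      simp only [hℓ, hval, hmod]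
      rw [if_neg (by omega), if_pos (by omega)]
      omega
  refine ⟨ℓ, 3 * (4 * m + 1), by omega, ?_, ?_⟩
  · refine ⟨?_, ?_, ?_⟩
    · intro x _
      have hv : x.val < 4 * m := ZMod.val_lt x
      simp only [hℓ, Set.mem_Icc]
      split_ifs with h <;> omega
    · intro a _ b _ h
      have ha : a.val < 4 * m := ZMod.val_lt a
      have hb : b.val < 4 * m := ZMod.val_lt b
      apply ZMod.val_injective
      simp only [hℓ] at h
      split_ifs at h <;> omega
    · intro k hk
      simp only [Set.mem_Icc] at hk
      rcases le_or_gt k (2 * m) with h | h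
      · refine ⟨((k - 1 : ℕ) : ZMod (4 * m)), Set.mem_univ _, ?_⟩
        have hv : ((k - 1 : ℕ) : ZMod (4 * m)).val = k - 1 :=
          ZMod.val_cast_of_lt (by omega)
        simp only [hℓ, hv]
        rw [if_pos (by omega)]
        omega
      · refine ⟨((6 * m - k : ℕ) : ZMod (4 * m)), Set.mem_univ _, ?_⟩
        have hv : ((6 * m - k : ℕ) : ZMod (4 * m)).val = 6 * m - k :=
          ZMod.val_cast_of_lt (by omega)
        simp only [hℓ, hv]
        rw [if_neg (by omega)]
        omega
  · intro x
    rw [e1, e2, e3, e0]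
    -- distinctness
    have d : ∀ a b : ℕ, a < 4 * m → b < 4 * m → a ≠ b →
        ((a : ZMod (4 * m)) ≠ (b : ZMod (4 * m))) := by
      intro a b ha hb hne h
      exact hne (castinj a b ha hb h)
    rw [Finset.sum_insert (by
        simp only [Finset.mem_insert, Finset.mem_singleton]
        push_neg
        exact ⟨d 1 (4*m-1) (by omega) (by omega) (by omega),
               d 1 m (by omega) (by omega) (by omega),
               d 1 (3*m) (by omega) (by omega) (by omega),
               d 1 (2*m-1) (by omega) (by omega) (by omega),
               d 1 (2*m+1) (by omega) (by omega) (by omega)⟩),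
      Finset.sum_insert (by
        simp only [Finset.mem_insert, Finset.mem_singleton]
        push_neg
        exact ⟨d (4*m-1) m (by omega) (by omega) (by omega),
               d (4*m-1) (3*m) (by omega) (by omega) (by omega),
               d (4*m-1) (2*m-1) (by omega) (by omega) (by omega),
               d (4*m-1) (2*m+1) (by omega) (by omega) (by omega)⟩),
      Finset.sum_insert (by
        simp only [Finset.mem_insert, Finset.mem_singleton]
        push_neg
        exact ⟨d m (3*m) (by omega) (by omega) (by omega),
               d m (2*m-1) (by omega) (by omega) (by omega),
               d m (2*m+1) (by omega) (by omega) (by omega)⟩),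
      Finset.sum_insert (by
        simp only [Finset.mem_insert, Finset.mem_singleton]
        push_neg
        exact ⟨d (3*m) (2*m-1) (by omega) (by omega) (by omega),
               d (3*m) (2*m+1) (by omega) (by omega) (by omega)⟩),
      Finset.sum_insert (by
        simp only [Finset.mem_singleton]
        exact d (2*m-1) (2*m+1) (by omega) (by omega) (by omega)),
      Finset.sum_singleton]
    -- pair up
    have c1 : ((2*m+1 : ℕ) : ZMod (4*m)) = ((1 : ℕ) : ZMod (4*m)) + ((2*m : ℕ) : ZMod (4*m)) := by
      rw [← Nat.cast_add]; congr 1; omega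
    have c2 : ((3*m : ℕ) : ZMod (4*m)) = ((m : ℕ) : ZMod (4*m)) + ((2*m : ℕ) : ZMod (4*m)) := by
      rw [← Nat.cast_add]; congr 1; omega
    have c3 : ((4*m-1 : ℕ) : ZMod (4*m)) = ((2*m-1 : ℕ) : ZMod (4*m)) + ((2*m : ℕ) : ZMod (4*m)) := by
      rw [← Nat.cast_add]; congr 1; omega
    rw [c1, c2, c3]
    have k1 := key (x + ((1 : ℕ) : ZMod (4*m)))
    have k2 := key (x + ((m : ℕ) : ZMod (4*m)))
    have k3 := key (x + ((2*m-1 : ℕ) : ZMod (4*m)))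
    simp only [← add_assoc]
    omega
end

section
/- For odd m ≥ 3, the circulant Circ(4m; {±2, ±m, ±(2m-2)}) (isomorphic to Pr_m[2K₁]) is distance magic. -/
private def lab (m : ℕ) (x : ZMod (4 * m)) : ℕ :=
  if x.val < 2 * m then x.val + 1 else 6 * m - x.val

/-- For odd m ≥ 3, the circulant Circ(4m; {±2, ±m, ±(2m-2)}) ≅ Pr_m[2K₁] is
distance magic. -/
theorem stmt_11 (m : ℕ) (hm : 3 ≤ m) (hodd : Odd m) :
    ∃ (ℓ : ZMod (4 * m) → ℕ) (κ : ℕ), 0 < κ ∧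
      Set.BijOn ℓ Set.univ (Set.Icc 1 (4 * m)) ∧
      ∀ x : ZMod (4 * m),
        ∑ s ∈ ({(2 : ZMod (4 * m)), -(2 : ZMod (4 * m)),
            (m : ZMod (4 * m)), -(m : ZMod (4 * m)),
            ((2 * m - 2 : ℕ) : ZMod (4 * m)), -((2 * m - 2 : ℕ) : ZMod (4 * m))} : Finset (ZMod (4 * m))),
          ℓ (x + s) = κ := by
  haveI : NeZero (4 * m) := ⟨by omega⟩
  obtain ⟨t, ht⟩ := hodd
  -- value of nat casts
  have hvalc : ∀ a : ℕ, a < 4 * m → ((a : ZMod (4 * m))).val = a := by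
    intro a ha
    rw [ZMod.val_natCast, Nat.mod_eq_of_lt ha]
  have hne : ∀ a b : ℕ, a < 4 * m → b < 4 * m → a ≠ b →
      (a : ZMod (4 * m)) ≠ (b : ZMod (4 * m)) := by
    intro a b ha hb hab h
    apply hab
    have := congrArg ZMod.val h
    rwa [hvalc a ha, hvalc b hb] at this
  -- key antipodal property
  have key : ∀ x : ZMod (4 * m),
      lab m x + lab m (x + ((2 * m : ℕ) : ZMod (4 * m))) = 4 * m + 1 := by
    intro x
    have hx := ZMod.val_lt x
    have hadd : (x + ((2 * m : ℕ) : ZMod (4 * m))).val = (x.val + 2 * m) % (4 * m) := by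
      rw [ZMod.val_add, hvalc (2 * m) (by omega)]
    by_cases h : x.val < 2 * m
    · have hmod : (x.val + 2 * m) % (4 * m) = x.val + 2 * m :=
        Nat.mod_eq_of_lt (by omega)
      simp only [lab, hadd, hmod]
      split_ifs <;> omega
    · have e1 : x.val + 2 * m = (x.val - 2 * m) + 4 * m := by omega
      have hmod : (x.val + 2 * m) % (4 * m) = x.val - 2 * m := by
        rw [e1, Nat.add_mod_right, Nat.mod_eq_of_lt (by omega)]
      simp only [lab, hadd, hmod]
      split_ifs <;> omega
  have key2 : ∀ (x : ZMod (4 * m)) (a b : ℕ), b = a + 2 * m →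
      lab m (x + (a : ZMod (4 * m))) + lab m (x + (b : ZMod (4 * m))) = 4 * m + 1 := by
    intro x a b hb
    have := key (x + (a : ZMod (4 * m)))
    rwa [add_assoc, ← Nat.cast_add, ← hb] at this
  refine ⟨lab m, 3 * (4 * m + 1), by omega, ⟨?_, ?_, ?_⟩, ?_⟩
  · -- MapsTo
    intro x _
    have hx := ZMod.val_lt x
    simp only [Set.mem_Icc, lab]
    split_ifs <;> omega
  · -- InjOn
    intro x _ y _ h
    have hx := ZMod.val_lt x
    have hy := ZMod.val_lt y
    have hval : x.val = y.val := by
      simp only [lab] at h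
      split_ifs at h <;> omega
    exact ZMod.val_injective _ hval
  · -- SurjOn
    intro n hn
    simp only [Set.mem_Icc] at hn
    by_cases h : n ≤ 2 * m
    · refine ⟨((n - 1 : ℕ) : ZMod (4 * m)), Set.mem_univ _, ?_⟩
      have hv : ((n - 1 : ℕ) : ZMod (4 * m)).val = n - 1 := hvalc _ (by omega)
      simp only [lab, hv]
      split_ifs <;> omega
    · refine ⟨((6 * m - n : ℕ) : ZMod (4 * m)), Set.mem_univ _, ?_⟩
      have hv : ((6 * m - n : ℕ) : ZMod (4 * m)).val = 6 * m - n := hvalc _ (by omega)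
      simp only [lab, hv]
      split_ifs <;> omega
  · -- the sum condition
    intro x
    have h4m0 : ((4 * m : ℕ) : ZMod (4 * m)) = 0 := ZMod.natCast_self _
    -- rewrite set elements as natural casts
    have e1 : (2 : ZMod (4 * m)) = ((2 : ℕ) : ZMod (4 * m)) := by norm_cast
    have e2 : (-(2 : ZMod (4 * m))) = ((4 * m - 2 : ℕ) : ZMod (4 * m)) := by
      rw [neg_eq_iff_add_eq_zero, Nat.cast_sub (by omega : 2 ≤ 4 * m)]
      push_cast
      push_cast at h4m0
      linear_combination h4m0
    have e4 : (-(m : ZMod (4 * m))) = ((3 * m : ℕ) : ZMod (4 * m)) := by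
      rw [neg_eq_iff_add_eq_zero]
      push_cast
      push_cast at h4m0
      linear_combination h4m0
    have e5 : ((2 * m - 2 : ℕ) : ZMod (4 * m)) = ((2 * m - 2 : ℕ) : ZMod (4 * m)) := rfl
    have e6 : (-((2 * m - 2 : ℕ) : ZMod (4 * m))) = ((2 * m + 2 : ℕ) : ZMod (4 * m)) := by
      rw [neg_eq_iff_add_eq_zero, Nat.cast_sub (by omega : 2 ≤ 2 * m)]
      push_cast
      push_cast at h4m0
      linear_combination h4m0
    rw [e2, e4, e6, e1]
    -- pairwise distinctness
    have d12 : ((2 : ℕ) : ZMod (4 * m)) ≠ ((4 * m - 2 : ℕ) : ZMod (4 * m)) :=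
      hne _ _ (by omega) (by omega) (by omega)
    have d13 : ((2 : ℕ) : ZMod (4 * m)) ≠ ((m : ℕ) : ZMod (4 * m)) :=
      hne _ _ (by omega) (by omega) (by omega)
    have d14 : ((2 : ℕ) : ZMod (4 * m)) ≠ ((3 * m : ℕ) : ZMod (4 * m)) :=
      hne _ _ (by omega) (by omega) (by omega)
    have d15 : ((2 : ℕ) : ZMod (4 * m)) ≠ ((2 * m - 2 : ℕ) : ZMod (4 * m)) :=
      hne _ _ (by omega) (by omega) (by omega)
    have d16 : ((2 : ℕ) : ZMod (4 * m)) ≠ ((2 * m + 2 : ℕ) : ZMod (4 * m)) :=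
      hne _ _ (by omega) (by omega) (by omega)
    have d23 : ((4 * m - 2 : ℕ) : ZMod (4 * m)) ≠ ((m : ℕ) : ZMod (4 * m)) :=
      hne _ _ (by omega) (by omega) (by omega)
    have d24 : ((4 * m - 2 : ℕ) : ZMod (4 * m)) ≠ ((3 * m : ℕ) : ZMod (4 * m)) :=
      hne _ _ (by omega) (by omega) (by omega)
    have d25 : ((4 * m - 2 : ℕ) : ZMod (4 * m)) ≠ ((2 * m - 2 : ℕ) : ZMod (4 * m)) :=
      hne _ _ (by omega) (by omega) (by omega)
    have d26 : ((4 * m - 2 : ℕ) : ZMod (4 * m)) ≠ ((2 * m + 2 : ℕ) : ZMod (4 * m)) :=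
      hne _ _ (by omega) (by omega) (by omega)
    have d34 : ((m : ℕ) : ZMod (4 * m)) ≠ ((3 * m : ℕ) : ZMod (4 * m)) :=
      hne _ _ (by omega) (by omega) (by omega)
    have d35 : ((m : ℕ) : ZMod (4 * m)) ≠ ((2 * m - 2 : ℕ) : ZMod (4 * m)) :=
      hne _ _ (by omega) (by omega) (by omega)
    have d36 : ((m : ℕ) : ZMod (4 * m)) ≠ ((2 * m + 2 : ℕ) : ZMod (4 * m)) :=
      hne _ _ (by omega) (by omega) (by omega)
    have d45 : ((3 * m : ℕ) : ZMod (4 * m)) ≠ ((2 * m - 2 : ℕ) : ZMod (4 * m)) :=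
      hne _ _ (by omega) (by omega) (by omega)
    have d46 : ((3 * m : ℕ) : ZMod (4 * m)) ≠ ((2 * m + 2 : ℕ) : ZMod (4 * m)) :=
      hne _ _ (by omega) (by omega) (by omega)
    have d56 : ((2 * m - 2 : ℕ) : ZMod (4 * m)) ≠ ((2 * m + 2 : ℕ) : ZMod (4 * m)) :=
      hne _ _ (by omega) (by omega) (by omega)
    rw [Finset.sum_insert (by simp only [Finset.mem_insert, Finset.mem_singleton]; push_neg; exact ⟨d12, d13, d14, d15, d16⟩),
        Finset.sum_insert (by simp only [Finset.mem_insert, Finset.mem_singleton]; push_neg; exact ⟨d23, d24, d25, d26⟩),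
        Finset.sum_insert (by simp only [Finset.mem_insert, Finset.mem_singleton]; push_neg; exact ⟨d34, d35, d36⟩),
        Finset.sum_insert (by simp only [Finset.mem_insert, Finset.mem_singleton]; push_neg; exact ⟨d45, d46⟩),
        Finset.sum_insert (by simpa using d56),
        Finset.sum_singleton]
    have k1 := key2 x 2 (2 * m + 2) (by omega)
    have k2 := key2 x (2 * m - 2) (4 * m - 2) (by omega)
    have k3 := key2 x m (3 * m) (by omega)
    linarith
end

section
/- If n₀ ≥ 3 satisfies n₀ ≡ 2 (mod 4), then the circulant Circ(3n₀; {±1, ±(n₀-1), ±(n₀+1)}) ≅ C_{n₀}[3K₁] is not distance magic. -/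
/-- If n₀ ≥ 3 and n₀ ≡ 2 (mod 4), then the circulant
Circ(3n₀; {±1, ±(n₀-1), ±(n₀+1)}) ≅ C_{n₀}[3K₁] is not distance magic. -/
theorem stmt_12 (n₀ n : ℕ) (hn₀ : 3 ≤ n₀) (hmod : n₀ % 4 = 2) (hn : n = 3 * n₀) :
    ¬ ∃ (ℓ : ZMod n → ℕ) (κ : ℕ), 0 < κ ∧
        Set.BijOn ℓ Set.univ (Set.Icc 1 n) ∧
        ∀ x : ZMod n,
          ∑ s ∈ ({(1 : ZMod n), -(1 : ZMod n),
              (n₀ : ZMod n) - 1, -((n₀ : ZMod n) - 1),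
              (n₀ : ZMod n) + 1, -((n₀ : ZMod n) + 1)} : Finset (ZMod n)),
            ℓ (x + s) = κ := by
  rintro ⟨ℓ, κ, hκpos, hbij, hmag⟩
  have hn₀6 : 6 ≤ n₀ := by omega
  have hnpos : 0 < n := by omega
  haveI : NeZero n := ⟨by omega⟩
  set c : ZMod n := (n₀ : ZMod n) with hc
  have hn0cast : ((n : ℕ) : ZMod n) = 0 := ZMod.natCast_self n
  have h3c : (3 : ZMod n) * c = 0 := by
    have : ((3 * n₀ : ℕ) : ZMod n) = 0 := by rw [← hn]; exact hn0cast
    push_cast at this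
    linear_combination this
  -- cast injectivity
  have hinj : ∀ a b : ℕ, a < n → b < n → (a : ZMod n) = (b : ZMod n) → a = b := by
    intro a b ha hb h
    rw [← ZMod.val_cast_of_lt ha, ← ZMod.val_cast_of_lt hb, h]
  have d : ∀ a b : ℕ, a < n → b < n → a ≠ b → ((a : ZMod n) ≠ (b : ZMod n)) :=
    fun a b ha hb hne h => hne (hinj a b ha hb h)
  -- the six shift elements as casts of naturals
  have e2 : -(1 : ZMod n) = ((n - 1 : ℕ) : ZMod n) := by
    rw [Nat.cast_sub (by omega : 1 ≤ n), hn0cast]; push_cast; ring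
  have e3 : c - 1 = ((n₀ - 1 : ℕ) : ZMod n) := by
    rw [Nat.cast_sub (by omega : 1 ≤ n₀)]; push_cast [hc]; ring
  have e4 : -(c - 1) = ((2 * n₀ + 1 : ℕ) : ZMod n) := by
    push_cast [hc]; linear_combination -h3c
  have e5 : c + 1 = ((n₀ + 1 : ℕ) : ZMod n) := by push_cast [hc]; ring
  have e6 : -(c + 1) = ((2 * n₀ - 1 : ℕ) : ZMod n) := by
    rw [Nat.cast_sub (by omega : 1 ≤ 2 * n₀)]; push_cast [hc]; linear_combination -h3c
  have e1 : (1 : ZMod n) = ((1 : ℕ) : ZMod n) := by push_cast; ring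
  have hTeq : ({(1 : ZMod n), -(1 : ZMod n), c - 1, -(c - 1), c + 1, -(c + 1)} :
      Finset (ZMod n)) =
      {((1 : ℕ) : ZMod n), ((n - 1 : ℕ) : ZMod n), ((n₀ - 1 : ℕ) : ZMod n),
       ((2 * n₀ + 1 : ℕ) : ZMod n), ((n₀ + 1 : ℕ) : ZMod n), ((2 * n₀ - 1 : ℕ) : ZMod n)} := by
    rw [e4, e6, e3, e5, e2, e1]
  -- generic sum over the six distinct cast elements
  have hsum : ∀ g : ZMod n → ℕ,
      (∑ s ∈ ({((1 : ℕ) : ZMod n), ((n - 1 : ℕ) : ZMod n), ((n₀ - 1 : ℕ) : ZMod n),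
        ((2 * n₀ + 1 : ℕ) : ZMod n), ((n₀ + 1 : ℕ) : ZMod n),
        ((2 * n₀ - 1 : ℕ) : ZMod n)} : Finset (ZMod n)), g s) =
      g ((1 : ℕ) : ZMod n) + g ((n - 1 : ℕ) : ZMod n) + g ((n₀ - 1 : ℕ) : ZMod n) +
      g ((2 * n₀ + 1 : ℕ) : ZMod n) + g ((n₀ + 1 : ℕ) : ZMod n) +
      g ((2 * n₀ - 1 : ℕ) : ZMod n) := by
    intro g
    rw [Finset.sum_insert (by
        simp only [Finset.mem_insert, Finset.mem_singleton]
        push_neg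
        exact ⟨d _ _ (by omega) (by omega) (by omega), d _ _ (by omega) (by omega) (by omega),
          d _ _ (by omega) (by omega) (by omega), d _ _ (by omega) (by omega) (by omega),
          d _ _ (by omega) (by omega) (by omega)⟩),
      Finset.sum_insert (by
        simp only [Finset.mem_insert, Finset.mem_singleton]
        push_neg
        exact ⟨d _ _ (by omega) (by omega) (by omega), d _ _ (by omega) (by omega) (by omega),
          d _ _ (by omega) (by omega) (by omega), d _ _ (by omega) (by omega) (by omega)⟩),
      Finset.sum_insert (by
        simp only [Finset.mem_insert, Finset.mem_singleton]
        push_neg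
        exact ⟨d _ _ (by omega) (by omega) (by omega), d _ _ (by omega) (by omega) (by omega),
          d _ _ (by omega) (by omega) (by omega)⟩),
      Finset.sum_insert (by
        simp only [Finset.mem_insert, Finset.mem_singleton]
        push_neg
        exact ⟨d _ _ (by omega) (by omega) (by omega), d _ _ (by omega) (by omega) (by omega)⟩),
      Finset.sum_insert (by
        simp only [Finset.mem_singleton]
        exact d _ _ (by omega) (by omega) (by omega)),
      Finset.sum_singleton]
    ring
  -- the coset-sum function
  set S : ZMod n → ℕ := fun y => ℓ y + ℓ (y + c) + ℓ (y + 2 * c) with hSdef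
  have hS : ∀ x : ZMod n, S (x + 1) + S (x - 1) = κ := by
    intro x
    have h := hmag x
    rw [hTeq, hsum (fun s => ℓ (x + s))] at h
    have a1 : x + ((1 : ℕ) : ZMod n) = x + 1 := by push_cast; ring
    have a2 : x + ((n - 1 : ℕ) : ZMod n) = x - 1 := by
      rw [← e2]; ring
    have a3 : x + ((n₀ - 1 : ℕ) : ZMod n) = (x - 1) + c := by
      rw [← e3]; ring
    have a4 : x + ((2 * n₀ + 1 : ℕ) : ZMod n) = (x + 1) + 2 * c := by
      rw [← e4]; linear_combination -h3c
    have a5 : x + ((n₀ + 1 : ℕ) : ZMod n) = (x + 1) + c := by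
      rw [← e5]; ring
    have a6 : x + ((2 * n₀ - 1 : ℕ) : ZMod n) = (x - 1) + 2 * c := by
      rw [← e6]; linear_combination -h3c
    simp only [a1, a2, a3, a4, a5, a6] at h
    simp only [hSdef]
    linarith [h]
  have hstep : ∀ y : ZMod n, S y + S (y + 2) = κ := by
    intro y
    have h := hS (y + 1)
    have b1 : y + 1 + 1 = y + 2 := by ring
    have b2 : y + 1 - 1 = y := by ring
    rw [b1, b2] at h
    linarith [h]
  have hper4 : ∀ y : ZMod n, S (y + 4) = S y := by
    intro y
    have h1 := hstep y
    have h2 := hstep (y + 2)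
    have b : y + 2 + 2 = y + 4 := by ring
    rw [b] at h2
    omega
  have hiter : ∀ (k : ℕ) (y : ZMod n), S (y + ((4 * k : ℕ) : ZMod n)) = S y := by
    intro k
    induction k with
    | zero => intro y; simp
    | succ m ih =>
      intro y
      have b : y + ((4 * (m + 1) : ℕ) : ZMod n) = (y + ((4 * m : ℕ) : ZMod n)) + 4 := by
        push_cast; ring
      rw [b, hper4, ih]
  have h2per : ∀ y : ZMod n, S (y + 2) = S y := by
    intro y
    have hk : 4 * ((n + 2) / 4) = n + 2 := by omega
    have h := hiter ((n + 2) / 4) y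
    rw [hk] at h
    have e : ((n + 2 : ℕ) : ZMod n) = 2 := by
      push_cast; linear_combination hn0cast
    rwa [e] at h
  have hκ2 : ∀ y : ZMod n, 2 * S y = κ := by
    intro y
    have h := hstep y
    rw [h2per y] at h
    omega
  -- sum of all labels
  have hsumℓ : ∑ y : ZMod n, ℓ y = ∑ i ∈ Finset.Icc 1 n, i := by
    apply Finset.sum_bij (fun a _ => ℓ a)
    · intro a _
      have := hbij.mapsTo (Set.mem_univ a)
      simpa [Finset.mem_Icc, Set.mem_Icc] using this
    · intro a _ b _ h
      exact hbij.injOn (Set.mem_univ a) (Set.mem_univ b) h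
    · intro b hb
      have hb' : b ∈ Set.Icc 1 n := by simpa [Set.mem_Icc, Finset.mem_Icc] using hb
      obtain ⟨a, -, ha⟩ := hbij.surjOn hb'
      exact ⟨a, Finset.mem_univ a, ha⟩
    · intro a _; rfl
  have hgauss : 2 * ∑ i ∈ Finset.Icc 1 n, i = n * (n + 1) := by
    have h0 : ∑ i ∈ Finset.range (n + 1), i = ∑ i ∈ Finset.Icc 1 n, i := by
      rw [Finset.sum_range_succ', ← Finset.Ico_add_one_right_eq_Icc, Finset.sum_Ico_eq_sum_range]
      simp [Nat.add_comm]
    have h1 := Finset.sum_range_id_mul_two (n + 1)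
    rw [h0] at h1
    simp only [Nat.add_sub_cancel] at h1
    linarith
  have hshift : ∀ a : ZMod n, ∑ y : ZMod n, ℓ (y + a) = ∑ y : ZMod n, ℓ y := by
    intro a
    exact Fintype.sum_equiv (Equiv.addRight a) _ _ (fun y => rfl)
  have hSsum : ∑ y : ZMod n, S y = 3 * ∑ y : ZMod n, ℓ y := by
    simp only [hSdef]
    rw [Finset.sum_add_distrib, Finset.sum_add_distrib, hshift c, hshift (2 * c)]
    ring
  have hcard : (Finset.univ : Finset (ZMod n)).card = n := by
    simp [ZMod.card n]
  have htot : n * κ = 2 * ∑ y : ZMod n, S y := by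
    calc n * κ = ∑ _y : ZMod n, κ := by rw [Finset.sum_const, hcard]; ring
    _ = ∑ y : ZMod n, 2 * S y := by
        exact Finset.sum_congr rfl (fun y _ => (hκ2 y).symm)
    _ = 2 * ∑ y : ZMod n, S y := by rw [Finset.mul_sum]
  have key : n * κ = n * (3 * (n + 1)) := by
    rw [htot, hSsum, hsumℓ]
    calc 2 * (3 * ∑ i ∈ Finset.Icc 1 n, i) = 3 * (2 * ∑ i ∈ Finset.Icc 1 n, i) := by ring
    _ = 3 * (n * (n + 1)) := by rw [hgauss]
    _ = n * (3 * (n + 1)) := by ring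
  have hκval : κ = 3 * (n + 1) := Nat.eq_of_mul_eq_mul_left hnpos key
  have heven : n % 2 = 0 := by omega
  have := hκ2 0
  omega
end

section
/- Let n be odd with n = dd'·3 where d, d' > 1 are coprime to each other and to 6, and let c ∈ ℤ_n satisfy c ≡ 0 (mod 3), c ≡ 1 (mod d), c ≡ -1 (mod d'). Setting λ = c + 1 - δn₀ and μ = c - 1 + δn₀ in ℤ_n (where n₀ = dd' and δ ∈ {±1} with n₀ ≡ δ mod 3), we have gcd(λ, n) = 3d' and gcd(μ, n) = 3d. -/
/-!
Modulo `3` both `λ = c + 1 - δn₀` and `μ = c - 1 + δn₀` vanish because `δn₀ ≡ δ² = 1`.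
Modulo `d'` we get `λ ≡ 0` and modulo `d` we get `λ ≡ 2`, a unit since `d` is odd; hence the
part of `n = 3d'·d` shared with `λ` is exactly `3d'`. Replacing `c` by `-c` and swapping `d`
and `d'` turns `λ` into `-μ`, which gives the second gcd.
-/

theorem Int.gcd_mul_eq_natAbs_of_dvd_of_isCoprime {x k b : ℤ} (hk : k ∣ x)
    (hb : IsCoprime x b) : Int.gcd x (k * b) = k.natAbs := by
  rw [Int.gcd_eq_natAbs, Int.natAbs_mul, Nat.Coprime.gcd_mul_right_cancel_right]
  · exact Int.gcd_eq_natAbs ▸ Int.gcd_eq_natAbs_right_iff_dvd.mpr hk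
  · exact Int.isCoprime_iff_gcd_eq_one.mp hb.symm

theorem Int.isCoprime_of_modEq {x y m : ℤ} (h : x ≡ y [ZMOD m]) (hy : IsCoprime y m) :
    IsCoprime x m := by
  obtain ⟨t, rfl⟩ := (Int.modEq_iff_add_fac).mp h
  exact hy.of_add_mul_left_left

theorem Int.isCoprime_natCast_of_coprime_of_dvd {d m p : ℕ} (h : Nat.Coprime d m) (hp : p ∣ m) :
    IsCoprime (p : ℤ) d :=
  Nat.isCoprime_iff_coprime.mpr (h.coprime_dvd_right hp).symm

theorem gcd_add_one_sub_mul_eq {d d' : ℕ} {δ c : ℤ} (h2d : IsCoprime (2 : ℤ) d)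
    (h3d' : IsCoprime (3 : ℤ) d') (hδ : δ * (d * d') ≡ 1 [ZMOD 3]) (hc3 : c ≡ 0 [ZMOD 3])
    (hcd : c ≡ 1 [ZMOD d]) (hcd' : c ≡ -1 [ZMOD d']) :
    Int.gcd (c + 1 - δ * (d * d')) (3 * (d * d')) = 3 * d' := by
  have hn₀d : (d * d' : ℤ) ≡ 0 [ZMOD d] := Int.modEq_zero_iff_dvd.mpr (dvd_mul_right _ _)
  have hn₀d' : (d * d' : ℤ) ≡ 0 [ZMOD d'] := Int.modEq_zero_iff_dvd.mpr (dvd_mul_left _ _)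
  have h3 : (3 : ℤ) ∣ c + 1 - δ * (d * d') := by
    have := (hc3.add_right 1).sub hδ
    rwa [zero_add, sub_self, Int.modEq_zero_iff_dvd] at this
  have hd' : (d' : ℤ) ∣ c + 1 - δ * (d * d') := by
    have := (hcd'.add_right 1).sub (hn₀d'.mul_left δ)
    rwa [neg_add_cancel, mul_zero, sub_zero, Int.modEq_zero_iff_dvd] at this
  have hd : IsCoprime (c + 1 - δ * (d * d')) d := by
    have := (hcd.add_right 1).sub (hn₀d.mul_left δ)
    rw [mul_zero, sub_zero, one_add_one_eq_two] at this
    exact Int.isCoprime_of_modEq this h2d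
  rw [show (3 * (d * d') : ℤ) = 3 * d' * d by ring,
    Int.gcd_mul_eq_natAbs_of_dvd_of_isCoprime (h3d'.mul_dvd h3 hd') hd]
  rfl

theorem stmt_16_general (d d' n₀ n : ℕ)
    (h6 : Nat.Coprime d 6) (h6' : Nat.Coprime d' 6)
    (hn₀ : n₀ = d * d') (hn : n = 3 * n₀)
    (δ : ℤ) (hδ : δ = 1 ∨ δ = -1) (hδn₀ : (n₀ : ℤ) ≡ δ [ZMOD 3])
    (c : ℤ) (hc3 : c ≡ 0 [ZMOD 3]) (hcd : c ≡ 1 [ZMOD (d : ℤ)])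
    (hcd' : c ≡ -1 [ZMOD (d' : ℤ)]) :
    Int.gcd (c + 1 - δ * (n₀ : ℤ)) (n : ℤ) = 3 * d' ∧
    Int.gcd (c - 1 + δ * (n₀ : ℤ)) (n : ℤ) = 3 * d := by
  subst hn hn₀
  push_cast at hδn₀ ⊢
  have hδn₀' : δ * (d * d') ≡ 1 [ZMOD 3] := by
    have hδδ : δ * δ = 1 := by rcases hδ with rfl | rfl <;> norm_num
    simpa [hδδ] using hδn₀.mul_left δ
  have h2 : ∀ {e : ℕ}, Nat.Coprime e 6 → IsCoprime (2 : ℤ) e := fun he =>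
    Int.isCoprime_natCast_of_coprime_of_dvd he (by norm_num)
  have h3 : ∀ {e : ℕ}, Nat.Coprime e 6 → IsCoprime (3 : ℤ) e := fun he =>
    Int.isCoprime_natCast_of_coprime_of_dvd he (by norm_num)
  refine ⟨gcd_add_one_sub_mul_eq (h2 h6) (h3 h6') hδn₀' hc3 hcd hcd', ?_⟩
  have hμ : c - 1 + δ * (d * d') = -(-c + 1 - δ * (d' * d)) := by ring
  rw [hμ, Int.neg_gcd, mul_comm (d : ℤ)]
  exact gcd_add_one_sub_mul_eq (h2 h6') (h3 h6) (by rwa [mul_comm (d' : ℤ)])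
    (by simpa using hc3.neg) (by simpa using hcd'.neg) hcd.neg

/-- gcd computation from the proof of Lemma 5.4: with λ = c + 1 - δn₀ and
μ = c - 1 + δn₀ one has gcd(λ, n) = 3d' and gcd(μ, n) = 3d. -/
theorem stmt_16 (d d' n₀ n : ℕ) (hd : 1 < d) (hd' : 1 < d')
    (hcop : Nat.Coprime d d') (h6 : Nat.Coprime d 6) (h6' : Nat.Coprime d' 6)
    (hn₀ : n₀ = d * d') (hn : n = 3 * n₀) (hodd : Odd n)
    (δ : ℤ) (hδ : δ = 1 ∨ δ = -1) (hδn₀ : (n₀ : ℤ) ≡ δ [ZMOD 3])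
    (c : ℤ) (hc3 : c ≡ 0 [ZMOD 3]) (hcd : c ≡ 1 [ZMOD (d : ℤ)])
    (hcd' : c ≡ -1 [ZMOD (d' : ℤ)]) :
    Int.gcd (c + 1 - δ * (n₀ : ℤ)) (n : ℤ) = 3 * d' ∧
    Int.gcd (c - 1 + δ * (n₀ : ℤ)) (n : ℤ) = 3 * d :=
  stmt_16_general d d' n₀ n h6 h6' hn₀ hn δ hδ hδn₀ c hc3 hcd hcd'
end

section
/- Let n = 30n₀ and suppose there exists an admissible type-3 pair, i.e., j, a, b, c with 10ja = n(1+10k₁), 10jb = n(3+10k₂), 3jc = n(1+3k₃) for some integers k₁,k₂,k₃, and suppose additionally there exist j', integers k₁', k₂' and a relabeling s₁,s₂,s₃ of ±a,±b,±c with j's₂ = (n/4)(1+2k₁') and j'(s₁+s₃) = (n/2)(1+2k₂') with s₁+s₃ even (a type-1 admissible character, so 4 | n). Then 5 divides j' and s₂. -/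
private lemma isCoprime_two_pow {α : ℕ} {x : ℤ} (h : ¬ (2:ℤ) ∣ x) :
    IsCoprime ((2:ℤ)^α) x := by
  apply IsCoprime.pow_left
  obtain ⟨k, hk⟩ : ∃ k, x = 2*k+1 := ⟨x/2, by omega⟩
  exact ⟨-k, 1, by rw [hk]; ring⟩

private lemma mem_six {n : ℕ} {x u v w : ℤ}
    (h : (x : ZMod n) ∈ ({(u : ZMod n), -(u : ZMod n), (v : ZMod n), -(v : ZMod n),
        (w : ZMod n), -(w : ZMod n)} : Finset (ZMod n))) :
    (n:ℤ) ∣ x - u ∨ (n:ℤ) ∣ x + u ∨ (n:ℤ) ∣ x - v ∨ (n:ℤ) ∣ x + v ∨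
      (n:ℤ) ∣ x - w ∨ (n:ℤ) ∣ x + w := by
  have conv : ∀ y : ℤ, (x : ZMod n) = (y : ZMod n) → (n:ℤ) ∣ x - y := by
    intro y hy
    have := ((ZMod.intCast_eq_intCast_iff x y n).mp hy).symm.dvd
    exact this
  simp only [Finset.mem_insert, Finset.mem_singleton] at h
  rcases h with h|h|h|h|h|h
  · exact Or.inl (conv u h)
  · refine Or.inr (Or.inl ?_)
    have := conv (-u) (by push_cast; exact h)
    simpa [sub_neg_eq_add] using this
  · exact Or.inr (Or.inr (Or.inl (conv v h)))
  · refine Or.inr (Or.inr (Or.inr (Or.inl ?_)))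
    have := conv (-v) (by push_cast; exact h)
    simpa [sub_neg_eq_add] using this
  · exact Or.inr (Or.inr (Or.inr (Or.inr (Or.inl (conv w h)))))
  · refine Or.inr (Or.inr (Or.inr (Or.inr (Or.inr ?_))))
    have := conv (-w) (by push_cast; exact h)
    simpa [sub_neg_eq_add] using this

private lemma aux2 {α : ℕ} {N c x y s₂ S K K' : ℤ}
    (hNdvd : (2:ℤ)^(α+1) ∣ N) (hcdvd : (2:ℤ)^(α+1) ∣ c)
    (hx : (2:ℤ)^α ∣ x) (hy : (2:ℤ)^α ∣ y) (hy' : ¬ (2:ℤ)^(α+1) ∣ y)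
    (hK' : ¬ (2:ℤ) ∣ K')
    (hs2 : N ∣ s₂ - x ∨ N ∣ s₂ + x)
    (hS : N ∣ S - c - y ∨ N ∣ S - c + y ∨ N ∣ S + c - y ∨ N ∣ S + c + y)
    (hF : 2*s₂*K = S*K') : False := by
  set M : ℤ := (2:ℤ)^(α+1) with hM
  have hMx : M ∣ 2*x := by
    obtain ⟨x₀, rfl⟩ := hx
    exact ⟨x₀, by rw [hM, pow_succ]; ring⟩
  have h2s2 : M ∣ 2*s₂ := by
    rcases hs2 with h|h
    · have := (hNdvd.trans h).mul_left 2
      rw [show 2*s₂ = 2*(s₂ - x) + 2*x by ring]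
      exact dvd_add this hMx
    · have := (hNdvd.trans h).mul_left 2
      rw [show 2*s₂ = 2*(s₂ + x) - 2*x by ring]
      exact dvd_sub this hMx
  have hMS : M ∣ S*K' := by
    rw [← hF, show 2*s₂*K = (2*s₂)*K by ring]
    exact h2s2.mul_right K
  have hMy : M ∣ y*K' := by
    rcases hS with h|h|h|h
    · have h1 : M ∣ S - y := by
        rw [show S - y = (S - c - y) + c by ring]
        exact dvd_add (hNdvd.trans h) hcdvd
      rw [show y*K' = S*K' - (S-y)*K' by ring]
      exact dvd_sub hMS (h1.mul_right K')
    · have h1 : M ∣ S + y := by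
        rw [show S + y = (S - c + y) + c by ring]
        exact dvd_add (hNdvd.trans h) hcdvd
      rw [show y*K' = (S+y)*K' - S*K' by ring]
      exact dvd_sub (h1.mul_right K') hMS
    · have h1 : M ∣ S - y := by
        rw [show S - y = (S + c - y) - c by ring]
        exact dvd_sub (hNdvd.trans h) hcdvd
      rw [show y*K' = S*K' - (S-y)*K' by ring]
      exact dvd_sub hMS (h1.mul_right K')
    · have h1 : M ∣ S + y := by
        rw [show S + y = (S + c + y) - c by ring]
        exact dvd_sub (hNdvd.trans h) hcdvd
      rw [show y*K' = (S+y)*K' - S*K' by ring]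
      exact dvd_sub (h1.mul_right K') hMS
  exact hy' ((isCoprime_two_pow hK').dvd_of_dvd_mul_right hMy)


private lemma mod5_good {a b s₁ s₂ s₃ : ℤ}
    (h5ab : (5:ℤ) ∣ 3*a - b) (h5a : ¬(5:ℤ) ∣ a) (h5b : ¬(5:ℤ) ∣ b) (h5s2 : (5:ℤ) ∣ s₂)
    (ma5 : (5:ℤ) ∣ a - s₁ ∨ (5:ℤ) ∣ a + s₁ ∨ (5:ℤ) ∣ a - s₂ ∨ (5:ℤ) ∣ a + s₂ ∨
      (5:ℤ) ∣ a - s₃ ∨ (5:ℤ) ∣ a + s₃)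
    (mb5 : (5:ℤ) ∣ b - s₁ ∨ (5:ℤ) ∣ b + s₁ ∨ (5:ℤ) ∣ b - s₂ ∨ (5:ℤ) ∣ b + s₂ ∨
      (5:ℤ) ∣ b - s₃ ∨ (5:ℤ) ∣ b + s₃) :
    ¬ (5:ℤ) ∣ (s₁ + s₃) := by omega

set_option maxHeartbeats 2000000 in
private lemma mod5_bad {a b c x s₁ s₂ s₃ : ℤ}
    (h5ab : (5:ℤ) ∣ 3*a - b) (h5a : ¬(5:ℤ) ∣ a) (h5b : ¬(5:ℤ) ∣ b) (h5c : (5:ℤ) ∣ c)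
    (h1 : (5:ℤ) ∣ c - s₁ ∨ (5:ℤ) ∣ c + s₁) (h3 : (5:ℤ) ∣ c - s₃ ∨ (5:ℤ) ∣ c + s₃)
    (hs2x : (5:ℤ) ∣ s₂ - x ∨ (5:ℤ) ∣ s₂ + x)
    (ma5 : (5:ℤ) ∣ a - s₁ ∨ (5:ℤ) ∣ a + s₁ ∨ (5:ℤ) ∣ a - s₂ ∨ (5:ℤ) ∣ a + s₂ ∨
      (5:ℤ) ∣ a - s₃ ∨ (5:ℤ) ∣ a + s₃)
    (mb5 : (5:ℤ) ∣ b - s₁ ∨ (5:ℤ) ∣ b + s₁ ∨ (5:ℤ) ∣ b - s₂ ∨ (5:ℤ) ∣ b + s₂ ∨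
      (5:ℤ) ∣ b - s₃ ∨ (5:ℤ) ∣ b + s₃) : False := by omega

private lemma mod5_bad2 {c x s₂ : ℤ} (h5c : (5:ℤ) ∣ c) (h5x : ¬(5:ℤ) ∣ x)
    (h : (5:ℤ) ∣ c - s₂ ∨ (5:ℤ) ∣ c + s₂)
    (hs2x : (5:ℤ) ∣ s₂ - x ∨ (5:ℤ) ∣ s₂ + x) : False := by omega

/-- If n = 30n₀ admits a type-3 admissible character (equations e1–e3) and a
type-1 admissible character j' with data s₁, s₂, s₃ relabeling ±a, ±b, ±c,
then 5 divides j' and s₂. -/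
theorem stmt_19 (n n₀ : ℕ) (hn₀ : 1 ≤ n₀) (hnn : n = 30 * n₀)
    (a b c : ℤ)
    (ha : 1 ≤ a ∧ a ≤ (n : ℤ) - 1) (hb : 1 ≤ b ∧ b ≤ (n : ℤ) - 1)
    (hc : 1 ≤ c ∧ c ≤ (n : ℤ) - 1)
    (hgen : AddSubgroup.closure ({(a : ZMod n), (b : ZMod n), (c : ZMod n)} : Set (ZMod n)) = ⊤)
    (j k₁ k₂ k₃ : ℤ)
    (e1 : 10 * j * a = (n : ℤ) * (1 + 10 * k₁))
    (e2 : 10 * j * b = (n : ℤ) * (3 + 10 * k₂))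
    (e3 : 3 * j * c = (n : ℤ) * (1 + 3 * k₃))
    (j' k₁' k₂' : ℤ) (s₁ s₂ s₃ : ℤ)
    (hset : ({(s₁ : ZMod n), -(s₁ : ZMod n), (s₂ : ZMod n), -(s₂ : ZMod n),
        (s₃ : ZMod n), -(s₃ : ZMod n)} : Finset (ZMod n)) =
      {(a : ZMod n), -(a : ZMod n), (b : ZMod n), -(b : ZMod n),
        (c : ZMod n), -(c : ZMod n)})
    (h4n : 4 ∣ n) (heven : Even (s₁ + s₃))
    (f1 : 4 * j' * s₂ = (n : ℤ) * (1 + 2 * k₁'))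
    (f2 : 2 * j' * (s₁ + s₃) = (n : ℤ) * (1 + 2 * k₂')) :
    (5 ∣ j') ∧ (5 ∣ s₂) := by
  have hp5 : Prime (5:ℤ) := by norm_num
  have hNpos : (0:ℤ) < (n:ℤ) := by exact_mod_cast (by omega : 0 < n)
  have h5N : (5:ℤ) ∣ (n:ℤ) := ⟨6*n₀, by push_cast [hnn]; ring⟩
  -- j ≠ 0 and j' ≠ 0
  have hjne : (10:ℤ)*j ≠ 0 := by
    intro h
    rw [h, zero_mul] at e1
    rcases mul_eq_zero.mp e1.symm with h'|h' <;> omega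
  have hj'ne : (2:ℤ)*j' ≠ 0 := by
    intro h
    have : 4*j'*s₂ = (2*j')*(2*s₂) := by ring
    rw [this, h, zero_mul] at f1
    rcases mul_eq_zero.mp f1.symm with h'|h' <;> omega
  -- key integer equations
  have E1 : a*(3+10*k₂) = b*(1+10*k₁) := by
    apply mul_left_cancel₀ hjne
    linear_combination (3+10*k₂)*e1 - (1+10*k₁)*e2
  have E2 : 3*c*(1+10*k₁) = a*(10+30*k₃) := by
    apply mul_left_cancel₀ hjne
    linear_combination 10*(1+10*k₁)*e3 - (10+30*k₃)*e1
  have F : 2*s₂*(1+2*k₂') = (s₁+s₃)*(1+2*k₁') := by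
    apply mul_left_cancel₀ hj'ne
    linear_combination (1+2*k₂')*f1 - (1+2*k₁')*f2
  -- mod 5 facts
  have h5c : (5:ℤ) ∣ c := by
    have h1 : (5:ℤ) ∣ (3*(1+10*k₁))*c := by
      rw [show (3*(1+10*k₁))*c = a*(10+30*k₃) from by linarith [E2]]
      exact ⟨a*(2+6*k₃), by ring⟩
    rcases (hp5.dvd_mul.mp h1) with h|h
    · rcases hp5.dvd_mul.mp h with h'|h' <;> omega
    · exact h
  have h5ab : (5:ℤ) ∣ 3*a - b := ⟨2*b*k₁ - 2*a*k₂, by linarith [E1]⟩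
  have G : ¬((5:ℤ) ∣ a ∧ (5:ℤ) ∣ b ∧ (5:ℤ) ∣ c) := by
    rintro ⟨g1, g2, g3⟩
    have h5n : (5:ℕ) ∣ n := by omega
    set φ := ZMod.castHom h5n (ZMod 5) with hφ
    have hle : AddSubgroup.closure ({(a : ZMod n), (b : ZMod n), (c : ZMod n)} : Set (ZMod n))
        ≤ AddMonoidHom.ker φ.toAddMonoidHom := by
      apply (AddSubgroup.closure_le _).mpr
      intro x hx
      have key : ∀ z : ℤ, (5:ℤ) ∣ z → (z : ZMod n) ∈ AddMonoidHom.ker φ.toAddMonoidHom := by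
        intro z hz
        have : φ ((z:ℤ) : ZMod n) = ((z:ℤ) : ZMod 5) := map_intCast φ z
        have h0 : ((z:ℤ) : ZMod 5) = 0 := (ZMod.intCast_zmod_eq_zero_iff_dvd z 5).mpr
          (by exact_mod_cast hz)
        exact AddMonoidHom.mem_ker.mpr (by simpa [h0] using this)
      simp only [Set.mem_insert_iff, Set.mem_singleton_iff] at hx
      rcases hx with rfl|rfl|rfl
      · exact key a g1
      · exact key b g2
      · exact key c g3
    rw [hgen] at hle
    have h1 : (1 : ZMod n) ∈ AddMonoidHom.ker φ.toAddMonoidHom := hle trivial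
    have : φ 1 = 0 := AddMonoidHom.mem_ker.mp h1
    rw [map_one] at this
    exact absurd this (by decide)
  have h5a : ¬(5:ℤ) ∣ a := by
    intro h
    exact G ⟨h, by omega, h5c⟩
  have h5b : ¬(5:ℤ) ∣ b := by
    intro h
    exact h5a (by omega)
  -- 2-adic facts
  obtain ⟨α, a', ha2', haeq'⟩ := Nat.exists_eq_pow_mul_and_not_dvd
    (show a.toNat ≠ 0 by omega) 2 (by norm_num)
  have haeq : a = 2^α * (a' : ℤ) := by
    have : (a.toNat : ℤ) = a := Int.toNat_of_nonneg (by omega)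
    rw [← this, haeq']; push_cast; ring
  have ha₀ : ¬ (2:ℤ) ∣ (a' : ℤ) := by exact_mod_cast ha2'
  have hxa : (2:ℤ)^α ∣ a := ⟨(a' : ℤ), haeq⟩
  have hna : ¬ (2:ℤ)^(α+1) ∣ a := by
    intro h
    rw [haeq, pow_succ] at h
    have := (mul_dvd_mul_iff_left (a := (2:ℤ)^α) (by positivity)).mp h
    exact ha₀ this
  have hxb : (2:ℤ)^α ∣ b := by
    have h1 : (2:ℤ)^α ∣ b * (1+10*k₁) := by
      rw [← E1, haeq]; exact ⟨(a':ℤ)*(3+10*k₂), by ring⟩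
    exact (isCoprime_two_pow (by omega)).dvd_of_dvd_mul_right h1
  have hnb : ¬ (2:ℤ)^(α+1) ∣ b := by
    intro h
    apply hna
    have h1 : (2:ℤ)^(α+1) ∣ a * (3+10*k₂) := by rw [E1]; exact h.mul_right _
    exact (isCoprime_two_pow (by omega)).dvd_of_dvd_mul_right h1
  have hc2 : (2:ℤ)^(α+1) ∣ c := by
    have h1 : (2:ℤ)^(α+1) ∣ (3*(1+10*k₁))*c := by
      rw [show (3*(1+10*k₁))*c = a*(10+30*k₃) from by linarith [E2], haeq, pow_succ]
      exact ⟨(a':ℤ)*(5+15*k₃), by ring⟩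
    exact (isCoprime_two_pow (by omega)).dvd_of_dvd_mul_left h1
  have hn2 : (2:ℤ)^(α+1) ∣ (n:ℤ) := by
    have h1 : (2:ℤ)^(α+1) ∣ (n:ℤ) * (1+10*k₁) := by
      rw [← e1, haeq, pow_succ]; exact ⟨5*j*(a':ℤ), by ring⟩
    exact (isCoprime_two_pow (by omega)).dvd_of_dvd_mul_right h1
  -- memberships
  have ms2 := mem_six (n := n) (x := s₂) (u := a) (v := b) (w := c)
    (by rw [← hset]; simp)
  have ms3 := mem_six (n := n) (x := s₃) (u := a) (v := b) (w := c)
    (by rw [← hset]; simp)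
  have mc := mem_six (n := n) (x := c) (u := s₁) (v := s₂) (w := s₃)
    (by rw [hset]; simp)
  have ma := mem_six (n := n) (x := a) (u := s₁) (v := s₂) (w := s₃)
    (by rw [hset]; simp)
  have mb := mem_six (n := n) (x := b) (u := s₁) (v := s₂) (w := s₃)
    (by rw [hset]; simp)
  -- reduce memberships mod 5
  have f5 : ∀ z : ℤ, (n:ℤ) ∣ z → (5:ℤ) ∣ z := fun z hz => h5N.trans hz
  have ma5 := ma.imp (f5 _) (Or.imp (f5 _) (Or.imp (f5 _) (Or.imp (f5 _)
    (Or.imp (f5 _) (f5 _)))))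
  have mb5 := mb.imp (f5 _) (Or.imp (f5 _) (Or.imp (f5 _) (Or.imp (f5 _)
    (Or.imp (f5 _) (f5 _)))))
  -- the good conclusion, given 5 ∣ s₂
  have good : (5:ℤ) ∣ s₂ → (5 ∣ j') ∧ (5 ∣ s₂) := by
    intro h5s2
    have hns : ¬ (5:ℤ) ∣ (s₁ + s₃) := mod5_good h5ab h5a h5b h5s2 ma5 mb5
    have h5f2 : (5:ℤ) ∣ 2*j'*(s₁+s₃) := by
      rw [f2]; exact h5N.mul_right _
    have : (5:ℤ) ∣ 2*j' := by
      rcases hp5.dvd_mul.mp h5f2 with h|h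
      · exact h
      · exact absurd h hns
    have h5j' : (5:ℤ) ∣ j' := by
      rcases hp5.dvd_mul.mp this with h|h
      · norm_num at h
      · exact h
    exact ⟨h5j', h5s2⟩
  -- the contradiction in the bad case
  have bad : ∀ x : ℤ, ¬(5:ℤ) ∣ x → (2:ℤ)^α ∣ x →
      ((n:ℤ) ∣ s₂ - x ∨ (n:ℤ) ∣ s₂ + x) → False := by
    intro x h5x hx2 hs2x
    have hs2x5 : (5:ℤ) ∣ s₂ - x ∨ (5:ℤ) ∣ s₂ + x := hs2x.imp (f5 _) (f5 _)
    have hK' : ¬ (2:ℤ) ∣ (1+2*k₁') := by omega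
    -- where does c live?
    rcases mc with h|h|h|h|h|h
    · -- c ≡ s₁ mod n
      rcases ms3 with h3|h3|h3|h3|h3|h3
      · exact aux2 hn2 hc2 hx2 hxa hna hK' hs2x
          (Or.inl (by rw [show s₁+s₃-c-a = (s₃-a)-(c-s₁) by ring]; exact dvd_sub h3 h)) F
      · exact aux2 hn2 hc2 hx2 hxa hna hK' hs2x
          (Or.inr (Or.inl (by rw [show s₁+s₃-c+a = (s₃+a)-(c-s₁) by ring]; exact dvd_sub h3 h))) F
      · exact aux2 hn2 hc2 hx2 hxb hnb hK' hs2x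
          (Or.inl (by rw [show s₁+s₃-c-b = (s₃-b)-(c-s₁) by ring]; exact dvd_sub h3 h)) F
      · exact aux2 hn2 hc2 hx2 hxb hnb hK' hs2x
          (Or.inr (Or.inl (by rw [show s₁+s₃-c+b = (s₃+b)-(c-s₁) by ring]; exact dvd_sub h3 h))) F
      · exact mod5_bad h5ab h5a h5b h5c (Or.inl (f5 _ h))
          (Or.inl (dvd_sub_comm.mp (f5 _ h3))) hs2x5 ma5 mb5
      · exact mod5_bad h5ab h5a h5b h5c (Or.inl (f5 _ h))
          (Or.inr (by rw [add_comm]; exact f5 _ h3)) hs2x5 ma5 mb5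
    · -- c ≡ -s₁ mod n
      rcases ms3 with h3|h3|h3|h3|h3|h3
      · exact aux2 hn2 hc2 hx2 hxa hna hK' hs2x
          (Or.inr (Or.inr (Or.inl (by rw [show s₁+s₃+c-a = (c+s₁)+(s₃-a) by ring]; exact dvd_add h h3)))) F
      · exact aux2 hn2 hc2 hx2 hxa hna hK' hs2x
          (Or.inr (Or.inr (Or.inr (by rw [show s₁+s₃+c+a = (c+s₁)+(s₃+a) by ring]; exact dvd_add h h3)))) F
      · exact aux2 hn2 hc2 hx2 hxb hnb hK' hs2x
          (Or.inr (Or.inr (Or.inl (by rw [show s₁+s₃+c-b = (c+s₁)+(s₃-b) by ring]; exact dvd_add h h3)))) F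
      · exact aux2 hn2 hc2 hx2 hxb hnb hK' hs2x
          (Or.inr (Or.inr (Or.inr (by rw [show s₁+s₃+c+b = (c+s₁)+(s₃+b) by ring]; exact dvd_add h h3)))) F
      · exact mod5_bad h5ab h5a h5b h5c (Or.inr (f5 _ h))
          (Or.inl (dvd_sub_comm.mp (f5 _ h3))) hs2x5 ma5 mb5
      · exact mod5_bad h5ab h5a h5b h5c (Or.inr (f5 _ h))
          (Or.inr (by rw [add_comm]; exact f5 _ h3)) hs2x5 ma5 mb5
    · -- c ≡ s₂ mod n : contradiction mod 5
      exact mod5_bad2 h5c h5x (Or.inl (f5 _ h)) hs2x5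
    · exact mod5_bad2 h5c h5x (Or.inr (f5 _ h)) hs2x5
    · -- c ≡ s₃ mod n : symmetric, use ms1
      have ms1 := mem_six (n := n) (x := s₁) (u := a) (v := b) (w := c)
        (by rw [← hset]; simp)
      rcases ms1 with h1|h1|h1|h1|h1|h1
      · exact aux2 hn2 hc2 hx2 hxa hna hK' hs2x
          (Or.inl (by rw [show s₁+s₃-c-a = (s₁-a)-(c-s₃) by ring]; exact dvd_sub h1 h)) F
      · exact aux2 hn2 hc2 hx2 hxa hna hK' hs2x
          (Or.inr (Or.inl (by rw [show s₁+s₃-c+a = (s₁+a)-(c-s₃) by ring]; exact dvd_sub h1 h))) F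
      · exact aux2 hn2 hc2 hx2 hxb hnb hK' hs2x
          (Or.inl (by rw [show s₁+s₃-c-b = (s₁-b)-(c-s₃) by ring]; exact dvd_sub h1 h)) F
      · exact aux2 hn2 hc2 hx2 hxb hnb hK' hs2x
          (Or.inr (Or.inl (by rw [show s₁+s₃-c+b = (s₁+b)-(c-s₃) by ring]; exact dvd_sub h1 h))) F
      · exact mod5_bad h5ab h5a h5b h5c (Or.inl (dvd_sub_comm.mp (f5 _ h1)))
          (Or.inl (f5 _ h)) hs2x5 ma5 mb5
      · exact mod5_bad h5ab h5a h5b h5c (Or.inr (by rw [add_comm]; exact f5 _ h1))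
          (Or.inl (f5 _ h)) hs2x5 ma5 mb5
    · -- c ≡ -s₃ mod n
      have ms1 := mem_six (n := n) (x := s₁) (u := a) (v := b) (w := c)
        (by rw [← hset]; simp)
      rcases ms1 with h1|h1|h1|h1|h1|h1
      · exact aux2 hn2 hc2 hx2 hxa hna hK' hs2x
          (Or.inr (Or.inr (Or.inl (by rw [show s₁+s₃+c-a = (c+s₃)+(s₁-a) by ring]; exact dvd_add h h1)))) F
      · exact aux2 hn2 hc2 hx2 hxa hna hK' hs2x
          (Or.inr (Or.inr (Or.inr (by rw [show s₁+s₃+c+a = (c+s₃)+(s₁+a) by ring]; exact dvd_add h h1)))) F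
      · exact aux2 hn2 hc2 hx2 hxb hnb hK' hs2x
          (Or.inr (Or.inr (Or.inl (by rw [show s₁+s₃+c-b = (c+s₃)+(s₁-b) by ring]; exact dvd_add h h1)))) F
      · exact aux2 hn2 hc2 hx2 hxb hnb hK' hs2x
          (Or.inr (Or.inr (Or.inr (by rw [show s₁+s₃+c+b = (c+s₃)+(s₁+b) by ring]; exact dvd_add h h1)))) F
      · exact mod5_bad h5ab h5a h5b h5c (Or.inl (dvd_sub_comm.mp (f5 _ h1)))
          (Or.inr (f5 _ h)) hs2x5 ma5 mb5
      · exact mod5_bad h5ab h5a h5b h5c (Or.inr (by rw [add_comm]; exact f5 _ h1))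
          (Or.inr (f5 _ h)) hs2x5 ma5 mb5
  -- final case analysis on s₂
  rcases ms2 with h|h|h|h|h|h
  · exact (bad a h5a hxa (Or.inl h)).elim
  · exact (bad a h5a hxa (Or.inr h)).elim
  · exact (bad b h5b hxb (Or.inl h)).elim
  · exact (bad b h5b hxb (Or.inr h)).elim
  · exact good (by have := f5 _ h; omega)
  · exact good (by have := f5 _ h; omega)
end
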